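/- arXiv:1710.03124 — 11 statements merged into one kernel-verified Lean document; each statement's English description precedes it below -/
import Mathlib

section
/- Suppose positive real numbers r12, r13, r14, r23, r24, r34 and a real number λ satisfy Dziobek's relation (r12⁻³ − λ)(r34⁻³ − λ) = (r13⁻³ − λ)(r24⁻³ − λ) = (r14⁻³ − λ)(r23⁻³ − λ). Then (r13³ − r12³)(r23³ − r34³)(r24³ − r14³) = (r12³ − r14³)(r24³ − r34³)(r13³ − r23³). -/
theorem relation_of_dziobek (r12 r13 r14 r23 r24 r34 lam : ℝ)
    (hr12 : 0 < r12) (hr13 : 0 < r13) (hr14 : 0 < r14)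
    (hr23 : 0 < r23) (hr24 : 0 < r24) (hr34 : 0 < r34)
    (hd1 : (r12 ^ (-3 : ℤ) - lam) * (r34 ^ (-3 : ℤ) - lam) =
      (r13 ^ (-3 : ℤ) - lam) * (r24 ^ (-3 : ℤ) - lam))
    (hd2 : (r13 ^ (-3 : ℤ) - lam) * (r24 ^ (-3 : ℤ) - lam) =
      (r14 ^ (-3 : ℤ) - lam) * (r23 ^ (-3 : ℤ) - lam)) :
    (r13 ^ 3 - r12 ^ 3) * (r23 ^ 3 - r34 ^ 3) * (r24 ^ 3 - r14 ^ 3) =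
      (r12 ^ 3 - r14 ^ 3) * (r24 ^ 3 - r34 ^ 3) * (r13 ^ 3 - r23 ^ 3) := by
  have ha : r12 ^ 3 ≠ 0 := pow_ne_zero _ hr12.ne'
  have hb : r13 ^ 3 ≠ 0 := pow_ne_zero _ hr13.ne'
  have hc : r14 ^ 3 ≠ 0 := pow_ne_zero _ hr14.ne'
  have hd : r23 ^ 3 ≠ 0 := pow_ne_zero _ hr23.ne'
  have he : r24 ^ 3 ≠ 0 := pow_ne_zero _ hr24.ne'
  have hf : r34 ^ 3 ≠ 0 := pow_ne_zero _ hr34.ne'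
  simp only [show (-3 : ℤ) = -(3 : ℕ) by norm_num, zpow_neg, zpow_natCast] at hd1 hd2
  set a := r12 ^ 3
  set b := r13 ^ 3
  set c := r14 ^ 3
  set d := r23 ^ 3
  set e := r24 ^ 3
  set f := r34 ^ 3
  field_simp at hd1 hd2
  have key : b * e * ((b - a) * (d - f) * (e - c) - (a - c) * (e - f) * (b - d)) = 0 := by
    linear_combination (-(c * d * (b + e) - b * e * (c + d))) * hd1 +
      (b * e * (a + f) - a * f * (b + e)) * hd2
  have h0 := (mul_eq_zero.mp key).resolve_left (mul_ne_zero hb he)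
  exact sub_eq_zero.mp h0
end

section
/- Let q1, q2, q3, q4 be four points in the Euclidean plane ℝ² such that q2 − q1 = t • (q3 − q4) for some real t > 0, with q1, q2, q4 not collinear, and suppose r12 ≠ r34. Then r13² − r24² = (r14² − r23²)(r34 + r12)/(r12 − r34). In particular, if r12 > r34 and r14 ≥ r23, then r13 ≥ r24. -/
/-! With `a = q1 - q4` and `v = q3 - q4`, each squared side and diagonal is a quadratic polynomial
in `t` with coefficients `‖a‖²`, `⟪a, v⟫`, `‖v‖²`. Both `r13² - r24²` and `r14² - r23²` turn out to
be multiples of `2⟪a, v⟫ + (1 - t)‖v‖²`, by the factors `1 + t` and `t - 1`; since `r12 = t r34`,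
these factors are `(r34 + r12) / r34` and `(r12 - r34) / r34`. -/

section

variable {E : Type*} [NormedAddCommGroup E] [InnerProductSpace ℝ E]

theorem norm_sub_sq_sub_norm_add_smul_sq_mul (a v : E) (t : ℝ) :
    (‖a - v‖ ^ 2 - ‖a + t • v‖ ^ 2) * (t - 1) =
      (1 + t) * (‖a‖ ^ 2 - ‖a + (t - 1) • v‖ ^ 2) := by
  rw [norm_sub_sq_real, norm_add_sq_real, norm_add_sq_real, real_inner_smul_right,
    real_inner_smul_right, norm_smul, norm_smul, mul_pow, mul_pow, Real.norm_eq_abs,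
    Real.norm_eq_abs, sq_abs, sq_abs]
  ring

theorem trapezoid_diag_sq_sub_mul {q1 q2 q3 q4 : E} {t : ℝ} (ht : 0 ≤ t)
    (hpar : q2 - q1 = t • (q3 - q4)) :
    (dist q1 q3 ^ 2 - dist q2 q4 ^ 2) * (dist q1 q2 - dist q3 q4) =
      (dist q1 q4 ^ 2 - dist q2 q3 ^ 2) * (dist q3 q4 + dist q1 q2) := by
  obtain rfl := eq_add_of_sub_eq' hpar
  set a := q1 - q4 with ha
  set v := q3 - q4 with hv
  have h13 : dist q1 q3 = ‖a - v‖ := by rw [dist_eq_norm, sub_sub_sub_cancel_right]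
  have h24 : dist (q1 + t • v) q4 = ‖a + t • v‖ := by rw [dist_eq_norm, ha]; abel_nf
  have h23 : dist (q1 + t • v) q3 = ‖a + (t - 1) • v‖ := by
    rw [dist_eq_norm, sub_smul, one_smul, ha, hv]; abel_nf
  have h12 : dist q1 (q1 + t • v) = t * ‖v‖ := by
    rw [dist_self_add_right, norm_smul, Real.norm_of_nonneg ht]
  rw [h13, h24, h23, h12, dist_eq_norm q1, dist_eq_norm q3]
  linear_combination ‖v‖ * norm_sub_sq_sub_norm_add_smul_sq_mul a v t

end

theorem trapezoid_diagonal_difference_general (q1 q2 q3 q4 : EuclideanSpace ℝ (Fin 2)) (t : ℝ)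
    (ht : 0 < t) (hpar : q2 - q1 = t • (q3 - q4))
    (hne : dist q1 q2 ≠ dist q3 q4) :
    dist q1 q3 ^ 2 - dist q2 q4 ^ 2 =
        (dist q1 q4 ^ 2 - dist q2 q3 ^ 2) * (dist q3 q4 + dist q1 q2) /
          (dist q1 q2 - dist q3 q4) ∧
      (dist q3 q4 < dist q1 q2 → dist q2 q3 ≤ dist q1 q4 →
        dist q2 q4 ≤ dist q1 q3) := by
  have key := trapezoid_diag_sq_sub_mul ht.le hpar
  refine ⟨eq_div_of_mul_eq (sub_ne_zero.mpr hne) key, fun hlt hle => ?_⟩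
  have hlegs : dist q2 q3 ^ 2 ≤ dist q1 q4 ^ 2 := pow_le_pow_left₀ dist_nonneg hle 2
  have hdiag : dist q2 q4 ^ 2 ≤ dist q1 q3 ^ 2 := by
    have hrhs : 0 ≤ (dist q1 q4 ^ 2 - dist q2 q3 ^ 2) * (dist q3 q4 + dist q1 q2) :=
      mul_nonneg (sub_nonneg.mpr hlegs) (add_nonneg dist_nonneg dist_nonneg)
    rw [← key] at hrhs
    exact sub_nonneg.mp (nonneg_of_mul_nonneg_left hrhs (sub_pos.mpr hlt))
  exact (sq_le_sq₀ dist_nonneg dist_nonneg).mp hdiag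

theorem trapezoid_diagonal_difference (q1 q2 q3 q4 : EuclideanSpace ℝ (Fin 2)) (t : ℝ)
    (ht : 0 < t) (hpar : q2 - q1 = t • (q3 - q4))
    (hncol : ¬ Collinear ℝ ({q1, q2, q4} : Set (EuclideanSpace ℝ (Fin 2))))
    (hne : dist q1 q2 ≠ dist q3 q4) :
    dist q1 q3 ^ 2 - dist q2 q4 ^ 2 =
        (dist q1 q4 ^ 2 - dist q2 q3 ^ 2) * (dist q3 q4 + dist q1 q2) /
          (dist q1 q2 - dist q3 q4) ∧
      (dist q3 q4 < dist q1 q2 → dist q2 q3 ≤ dist q1 q4 →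
        dist q2 q4 ≤ dist q1 q3) :=
  trapezoid_diagonal_difference_general q1 q2 q3 q4 t ht hpar hne
end

section
/- Let q1, q2, q3, q4 be four points in the Euclidean plane ℝ² such that q2 − q1 = t • (q3 − q4) for some real t > 0, with q1, q2, q4 not collinear, and suppose t ≠ 1 (so the trapezoid is not a parallelogram). Then |r14 − r23| < |r12 − r34| < r14 + r23. -/
theorem trapezoid_side_inequalities (q1 q2 q3 q4 : EuclideanSpace ℝ (Fin 2)) (t : ℝ)
    (ht : 0 < t) (hpar : q2 - q1 = t • (q3 - q4))
    (hncol : ¬ Collinear ℝ ({q1, q2, q4} : Set (EuclideanSpace ℝ (Fin 2))))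
    (htne : t ≠ 1) :
    |dist q1 q4 - dist q2 q3| < |dist q1 q2 - dist q3 q4| ∧
      |dist q1 q2 - dist q3 q4| < dist q1 q4 + dist q2 q3 := by
  have ht0 : t ≠ 0 := ne_of_gt ht
  have h34 : q3 - q4 = t⁻¹ • (q2 - q1) := by
    rw [hpar, smul_smul, inv_mul_cancel₀ ht0, one_smul]
  have ht1 : (1 : ℝ) - t⁻¹ ≠ 0 := by
    intro h
    apply htne
    field_simp at h
    linarith
  -- q2 - q3 is never a scalar multiple of q1 - q4
  have H : ∀ c : ℝ, q2 - q3 ≠ c • (q1 - q4) := by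
    intro c hc
    apply hncol
    have h1 : (1 - t⁻¹) • (q2 - q4) = (c - t⁻¹) • (q1 - q4) := by
      linear_combination (norm := module) hc + h34
    have hs : q2 - q4 = ((1 - t⁻¹)⁻¹ * (c - t⁻¹)) • (q1 - q4) := by
      rw [mul_smul, ← h1, smul_smul, inv_mul_cancel₀ ht1, one_smul]
    rw [collinear_iff_of_mem (Set.mem_insert q1 _)]
    refine ⟨q1 - q4, fun p hp => ?_⟩
    simp only [Set.mem_insert_iff, Set.mem_singleton_iff] at hp
    rcases hp with rfl | rfl | rfl
    · exact ⟨0, by simp⟩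
    · refine ⟨(1 - t⁻¹)⁻¹ * (c - t⁻¹) - 1, ?_⟩
      simp only [vadd_eq_add]
      linear_combination (norm := module) hs
    · refine ⟨-1, ?_⟩
      simp only [vadd_eq_add]
      module
  have hu0 : q1 - q4 ≠ 0 := by
    intro h
    apply hncol
    have h4 : q1 = q4 := by
      have := sub_eq_zero.mp h; exact this
    subst h4
    have hset : ({q1, q2, q1} : Set (EuclideanSpace ℝ (Fin 2))) = {q1, q2} := by
      ext x; simp [or_comm]
    rw [hset]
    exact collinear_pair ℝ q1 q2
  have hw0 : q2 - q3 ≠ 0 := by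
    intro h
    exact H 0 (by simp [h])
  -- not same ray, both directions
  have hnr1 : ¬ SameRay ℝ (q1 - q4) (q2 - q3) := by
    intro hr
    obtain ⟨r, _, hr2⟩ := hr.exists_nonneg_left hu0
    exact H r hr2.symm
  have hnr2 : ¬ SameRay ℝ (q1 - q4) (-(q2 - q3)) := by
    intro hr
    obtain ⟨r, _, hr2⟩ := hr.exists_nonneg_left hu0
    apply H (-r)
    rw [neg_smul, hr2, neg_neg]
  -- express |r12 - r34| as a norm
  have ha : (q1 - q4) - (q2 - q3) = (t⁻¹ - 1) • (q2 - q1) := by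
    linear_combination (norm := module) h34
  have hn34 : ‖q3 - q4‖ = t⁻¹ * ‖q2 - q1‖ := by
    rw [h34, norm_smul, Real.norm_eq_abs, abs_of_pos (inv_pos.mpr ht)]
  have key : |dist q1 q2 - dist q3 q4| = ‖(q1 - q4) - (q2 - q3)‖ := by
    rw [dist_eq_norm q1 q2, dist_eq_norm q3 q4, norm_sub_rev q1 q2, hn34, ha, norm_smul,
      Real.norm_eq_abs]
    rw [show ‖q2 - q1‖ - t⁻¹ * ‖q2 - q1‖ = -((t⁻¹ - 1) * ‖q2 - q1‖) by ring, abs_neg, abs_mul,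
      abs_of_nonneg (norm_nonneg _)]
  rw [dist_eq_norm q1 q4, dist_eq_norm q2 q3, key]
  constructor
  · exact abs_lt_norm_sub_of_not_sameRay hnr1
  · have := norm_add_lt_of_not_sameRay hnr2
    rwa [← sub_eq_add_neg, norm_neg] at this
end

section
/- Define F : ℝ⁶ → ℝ by F(r12, r13, r14, r23, r24, r34) = r12² r34² − (1/4)(r13² + r24² − r14² − r23²)², and let H : ℝ⁶ → ℝ be the Cayley–Menger determinant of r12, r13, r14, r23, r24, r34. Let q1, q2, q3, q4 be four points in the Euclidean plane ℝ² with q2 − q1 = t • (q3 − q4) for some t > 0 and q1, q2, q4 not collinear, let r ∈ ℝ⁶ be the vector of their mutual distances (in the order r12, r13, r14, r23, r24, r34), and let h be the distance between the parallel lines through q1, q2 and through q3, q4 (i.e., the distance from q3 to the affine line through q1 and q2). Then the (Fréchet) derivatives satisfy ∇H(r) = 8 h² ∇F(r). -/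
/-!
Write `u = q₃ - q₄` and split `q₃ - q₁ = α u + n` with `n ⟂ u`, so that `h = ‖n‖`. By Pythagoras
every squared distance `s_ij = r_ij²` is a polynomial in `‖u‖², α, t, h²`. Both `H` and `F` factor
through `r ↦ r²`, as a cubic `G` and a quadratic `P` in the squared distances, and at such a point
`∇G = 8 h² ∇P` is a polynomial identity in `‖u‖², α, t, h²`; the chain rule finishes.
-/

noncomputable def cayleyMengerH : (Fin 6 → ℝ) → ℝ := fun r =>
  Matrix.det
    !![0, 1, 1, 1, 1;
       1, 0, (r 0) ^ 2, (r 1) ^ 2, (r 2) ^ 2;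
       1, (r 0) ^ 2, 0, (r 3) ^ 2, (r 4) ^ 2;
       1, (r 1) ^ 2, (r 3) ^ 2, 0, (r 5) ^ 2;
       1, (r 2) ^ 2, (r 4) ^ 2, (r 5) ^ 2, 0]

noncomputable def trapF : (Fin 6 → ℝ) → ℝ := fun r =>
  (r 0) ^ 2 * (r 5) ^ 2 -
    (1 / 4) * ((r 1) ^ 2 + (r 4) ^ 2 - (r 2) ^ 2 - (r 3) ^ 2) ^ 2

open scoped RealInnerProductSpace

section PartialDerivatives

variable {𝕜 ι F : Type*} [NontriviallyNormedField 𝕜] [Fintype ι] [DecidableEq ι]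
  [NormedAddCommGroup F] [NormedSpace 𝕜 F]

theorem fderiv_apply_single_eq_deriv_update {f : (ι → 𝕜) → F} {x : ι → 𝕜}
    (hf : DifferentiableAt 𝕜 f x) (i : ι) :
    fderiv 𝕜 f x (Pi.single i 1) = deriv (fun y => f (Function.update x i y)) (x i) := by
  have hf' : HasFDerivAt f (fderiv 𝕜 f x) (Function.update x i (x i)) := by
    simpa using hf.hasFDerivAt
  exact (hf'.comp_hasDerivAt (x i) (hasDerivAt_update x i (x i))).deriv.symm

theorem fderiv_eq_smul_of_deriv_update_eq {f g : (ι → 𝕜) → F} {x : ι → 𝕜} {c : 𝕜}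
    (hf : DifferentiableAt 𝕜 f x) (hg : DifferentiableAt 𝕜 g x)
    (h : ∀ i, deriv (fun y => f (Function.update x i y)) (x i) =
      c • deriv (fun y => g (Function.update x i y)) (x i)) :
    fderiv 𝕜 f x = c • fderiv 𝕜 g x := by
  refine ContinuousLinearMap.coe_injective ((Pi.basisFun 𝕜 ι).ext fun i => ?_)
  simpa [fderiv_apply_single_eq_deriv_update hf, fderiv_apply_single_eq_deriv_update hg] using h i

end PartialDerivatives

section InnerProductSpace

variable {V : Type*} [NormedAddCommGroup V] [InnerProductSpace ℝ V]

theorem norm_smul_add_sq_of_inner_eq_zero {u n : V} (hn : ⟪n, u⟫ = 0) (x : ℝ) :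
    ‖x • u + n‖ ^ 2 = x ^ 2 * ‖u‖ ^ 2 + ‖n‖ ^ 2 := by
  rw [norm_add_sq_real, real_inner_smul_left, real_inner_comm, hn, norm_smul, mul_pow,
    Real.norm_eq_abs, sq_abs]
  ring

theorem inner_sub_smul_inner_div_norm_sq (x u : V) :
    ⟪x - (⟪x, u⟫ / ‖u‖ ^ 2) • u, u⟫ = 0 := by
  rcases eq_or_ne u 0 with rfl | hu
  · simp
  · rw [inner_sub_left, real_inner_smul_left, real_inner_self_eq_norm_sq]
    field_simp
    ring

theorem infDist_affineSpan_pair_eq_norm {a b p n : V} {α : ℝ} (hp : p - a = α • (b - a) + n)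
    (hn : ⟪n, b - a⟫ = 0) : Metric.infDist p (line[ℝ, a, b] : Set V) = ‖n‖ := by
  have hdist : ∀ β : ℝ,
      dist p (AffineMap.lineMap a b β) ^ 2 = (α - β) ^ 2 * ‖b - a‖ ^ 2 + ‖n‖ ^ 2 := by
    intro β
    rw [dist_eq_norm, AffineMap.lineMap_apply_module', ← norm_smul_add_sq_of_inner_eq_zero hn]
    congr 2
    linear_combination (norm := module) hp
  apply le_antisymm
  · refine (Metric.infDist_le_dist_of_mem (AffineMap.lineMap_mem_affineSpan_pair α a b)).trans_eq ?_
    rw [← sq_eq_sq₀ dist_nonneg (norm_nonneg _), hdist]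
    ring
  · refine (Metric.le_infDist ⟨a, left_mem_affineSpan_pair ℝ a b⟩).2 fun y hy => ?_
    obtain ⟨β, rfl⟩ := mem_affineSpan_pair_iff_exists_lineMap_eq.1 hy
    refine le_of_sq_le_sq ?_ dist_nonneg
    rw [hdist]
    nlinarith [sq_nonneg (α - β), sq_nonneg ‖b - a‖]

/-- The squared distances `(s₁₂, s₁₃, s₁₄, s₂₃, s₂₄, s₃₄)` of a trapezoid with `q₂ - q₁ = t u`,
`q₃ - q₄ = u`, `q₃ - q₁ = α u + n`, `n ⟂ u`, `L = ‖u‖²` and `k = ‖n‖²`. -/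
def trapezoidSqDist (L α t k : ℝ) : Fin 6 → ℝ :=
  ![t ^ 2 * L, α ^ 2 * L + k, (α - 1) ^ 2 * L + k, (α - t) ^ 2 * L + k,
    (α - 1 - t) ^ 2 * L + k, L]

theorem sq_dist_eq_trapezoidSqDist {q1 q2 q3 q4 n : V} {t α : ℝ} (hpar : q2 - q1 = t • (q3 - q4))
    (h13 : q3 - q1 = α • (q3 - q4) + n) (hn : ⟪n, q3 - q4⟫ = 0) :
    (fun i => ![dist q1 q2, dist q1 q3, dist q1 q4, dist q2 q3, dist q2 q4, dist q3 q4] i ^ 2) =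
      trapezoidSqDist (‖q3 - q4‖ ^ 2) α t (‖n‖ ^ 2) := by
  have h14 : q4 - q1 = (α - 1) • (q3 - q4) + n := by linear_combination (norm := module) h13
  have h23 : q3 - q2 = (α - t) • (q3 - q4) + n := by
    linear_combination (norm := module) h13 - hpar
  have h24 : q4 - q2 = (α - 1 - t) • (q3 - q4) + n := by
    linear_combination (norm := module) h13 - hpar
  funext i
  fin_cases i <;>
    simp [trapezoidSqDist, dist_eq_norm', hpar, h13, h14, h23, h24, norm_sub_rev q4 q3,
      norm_smul_add_sq_of_inner_eq_zero hn, norm_smul, mul_pow]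

end InnerProductSpace

noncomputable def cayleyMengerSq (s : Fin 6 → ℝ) : ℝ :=
  2 * (s 0 * s 5 * (s 1 + s 2 + s 3 + s 4 - s 0 - s 5) +
    s 1 * s 4 * (s 0 + s 2 + s 3 + s 5 - s 1 - s 4) +
    s 2 * s 3 * (s 0 + s 1 + s 4 + s 5 - s 2 - s 3) -
    s 0 * s 1 * s 3 - s 0 * s 2 * s 4 - s 1 * s 2 * s 5 - s 3 * s 4 * s 5)

noncomputable def trapFSq (s : Fin 6 → ℝ) : ℝ :=
  s 0 * s 5 - (1 / 4) * (s 1 + s 4 - s 2 - s 3) ^ 2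

theorem cayleyMengerH_eq_comp : cayleyMengerH = cayleyMengerSq ∘ fun r i => r i ^ 2 := by
  funext r
  simp (config := { decide := true }) [cayleyMengerH, Matrix.det_succ_row_zero, Fin.sum_univ_succ,
    Fin.succAbove]
  simp only [cayleyMengerSq]
  ring

theorem differentiable_cayleyMengerSq : Differentiable ℝ cayleyMengerSq := by
  unfold cayleyMengerSq; fun_prop

theorem differentiable_trapFSq : Differentiable ℝ trapFSq := by
  unfold trapFSq; fun_prop

theorem trapF_eq_comp : trapF = trapFSq ∘ fun r i => r i ^ 2 := rfl

theorem fderiv_cayleyMengerSq_trapezoidSqDist (L α t k : ℝ) :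
    fderiv ℝ cayleyMengerSq (trapezoidSqDist L α t k) =
      (8 * k) • fderiv ℝ trapFSq (trapezoidSqDist L α t k) := by
  refine fderiv_eq_smul_of_deriv_update_eq (differentiable_cayleyMengerSq _)
    (differentiable_trapFSq _) fun i => ?_
  fin_cases i <;>
    simp (disch := fun_prop) [cayleyMengerSq, trapFSq, trapezoidSqDist, Function.update_apply] <;>
    ring

theorem gradients_parallel_general (q1 q2 q3 q4 : EuclideanSpace ℝ (Fin 2)) (t : ℝ)
    (ht : 0 < t) (hpar : q2 - q1 = t • (q3 - q4))
    (r : Fin 6 → ℝ)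
    (hr : r = ![dist q1 q2, dist q1 q3, dist q1 q4, dist q2 q3, dist q2 q4, dist q3 q4])
    (h : ℝ)
    (hh : h = Metric.infDist q3 (affineSpan ℝ ({q1, q2} : Set (EuclideanSpace ℝ (Fin 2))))) :
    fderiv ℝ cayleyMengerH r = (8 * h ^ 2) • fderiv ℝ trapF r := by
  set u := q3 - q4
  set α := ⟪q3 - q1, u⟫ / ‖u‖ ^ 2
  set n := q3 - q1 - α • u
  have hn : ⟪n, u⟫ = 0 := inner_sub_smul_inner_div_norm_sq _ _
  have h13 : q3 - q1 = α • u + n := (add_sub_cancel _ _).symm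
  have hh' : h = ‖n‖ := by
    refine hh.trans (infDist_affineSpan_pair_eq_norm (α := α / t) ?_ ?_)
    · rw [hpar, smul_smul, div_mul_cancel₀ α ht.ne', h13]
    · rw [hpar, inner_smul_right, hn, mul_zero]
  have hsq : (fun i => r i ^ 2) = trapezoidSqDist (‖u‖ ^ 2) α t (h ^ 2) := by
    rw [hr, hh']
    exact sq_dist_eq_trapezoidSqDist hpar h13 hn
  have hsq_diff : DifferentiableAt ℝ (fun r : Fin 6 → ℝ => fun i => r i ^ 2) r := by fun_prop
  rw [cayleyMengerH_eq_comp, trapF_eq_comp,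
    fderiv_comp _ (differentiable_cayleyMengerSq _) hsq_diff,
    fderiv_comp _ (differentiable_trapFSq _) hsq_diff, hsq,
    fderiv_cayleyMengerSq_trapezoidSqDist, ContinuousLinearMap.smul_comp]

theorem gradients_parallel (q1 q2 q3 q4 : EuclideanSpace ℝ (Fin 2)) (t : ℝ)
    (ht : 0 < t) (hpar : q2 - q1 = t • (q3 - q4))
    (hncol : ¬ Collinear ℝ ({q1, q2, q4} : Set (EuclideanSpace ℝ (Fin 2))))
    (r : Fin 6 → ℝ)
    (hr : r = ![dist q1 q2, dist q1 q3, dist q1 q4, dist q2 q3, dist q2 q4, dist q3 q4])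
    (h : ℝ)
    (hh : h = Metric.infDist q3 (affineSpan ℝ ({q1, q2} : Set (EuclideanSpace ℝ (Fin 2))))) :
    fderiv ℝ cayleyMengerH r = (8 * h ^ 2) • fderiv ℝ trapF r :=
  gradients_parallel_general q1 q2 q3 q4 t ht hpar r hr h hh
end

section
/- Let q1, q2, q3, q4 be four points in the Euclidean plane ℝ² with q2 − q1 = t • (q3 − q4) for some t > 0 and q1, q2, q4 not collinear; let r_ij denote their mutual distances and suppose positive masses m1, m2, m3, m4 and real numbers λ, σ satisfy the trapezoidal central configuration equations for these distances. If m1 = m2 and m3 = m4, then the configuration is an isosceles trapezoid: r13 = r24 and r14 = r23. -/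
lemma dist_eq_of_zpow_neg3 (x y : ℝ) (hx : 0 < x) (hy : 0 < y)
    (h : x ^ (-3 : ℤ) = y ^ (-3 : ℤ)) : x = y := by
  rw [zpow_neg, zpow_neg, inv_inj] at h
  norm_num at h
  rcases lt_trichotomy x y with hlt | heq | hlt
  · exact absurd h (ne_of_lt (pow_lt_pow_left₀ hlt hx.le (by norm_num)))
  · exact heq
  · exact absurd h (ne_of_gt (pow_lt_pow_left₀ hlt hy.le (by norm_num)))

theorem isosceles_trapezoid_of_m1_eq_m2_m3_eq_m4
    (q1 q2 q3 q4 : EuclideanSpace ℝ (Fin 2)) (t : ℝ)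
    (ht : 0 < t) (hpar : q2 - q1 = t • (q3 - q4))
    (hncol : ¬ Collinear ℝ ({q1, q2, q4} : Set (EuclideanSpace ℝ (Fin 2))))
    (m1 m2 m3 m4 lam sig : ℝ)
    (hm1 : 0 < m1) (hm2 : 0 < m2) (hm3 : 0 < m3) (hm4 : 0 < m4)
    (h12 : m1 * m2 * (dist q1 q2 ^ (-3 : ℤ) - lam) = sig * dist q3 q4 ^ 2)
    (h34 : m3 * m4 * (dist q3 q4 ^ (-3 : ℤ) - lam) = sig * dist q1 q2 ^ 2)
    (h13 : m1 * m3 * (dist q1 q3 ^ (-3 : ℤ) - lam) = -(sig * dist q1 q2 * dist q3 q4))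
    (h24 : m2 * m4 * (dist q2 q4 ^ (-3 : ℤ) - lam) = -(sig * dist q1 q2 * dist q3 q4))
    (h14 : m1 * m4 * (dist q1 q4 ^ (-3 : ℤ) - lam) = sig * dist q1 q2 * dist q3 q4)
    (h23 : m2 * m3 * (dist q2 q3 ^ (-3 : ℤ) - lam) = sig * dist q1 q2 * dist q3 q4)
    (hm12 : m1 = m2) (hm34 : m3 = m4) :
    dist q1 q3 = dist q2 q4 ∧ dist q1 q4 = dist q2 q3 := by
  subst hm12 hm34
  have hq13 : q1 ≠ q3 := by
    rintro rfl
    apply hncol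
    apply (collinear_iff_of_mem (Set.mem_insert q1 _)).2
    refine ⟨q1 - q4, ?_⟩
    rintro p (rfl | rfl | rfl)
    · exact ⟨0, by simp⟩
    · refine ⟨t, ?_⟩
      rw [sub_eq_iff_eq_add] at hpar
      simpa using hpar
    · exact ⟨-1, by simp [neg_smul]⟩
  have hq24 : q2 ≠ q4 := by
    rintro rfl
    apply hncol
    have : ({q1, q2, q2} : Set (EuclideanSpace ℝ (Fin 2))) = {q1, q2} := by
      simp
    rw [this]; exact collinear_pair ℝ q1 q2
  have hq14 : q1 ≠ q4 := by
    rintro rfl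
    apply hncol
    have : ({q1, q2, q1} : Set (EuclideanSpace ℝ (Fin 2))) = {q1, q2} := by
      ext x; constructor <;> (intro h; simp at h ⊢; tauto)
    rw [this]; exact collinear_pair ℝ q1 q2
  have hq23 : q2 ≠ q3 := by
    rintro rfl
    apply hncol
    apply (collinear_iff_of_mem (show q2 ∈ ({q1, q2, q4} : Set _) by simp)).2
    refine ⟨q2 - q4, ?_⟩
    rintro p (rfl | rfl | rfl)
    · refine ⟨-t, ?_⟩
      have hp : p = q2 - t • (q2 - q4) := by
        rw [eq_sub_iff_add_eq, add_comm]
        exact (sub_eq_iff_eq_add.1 hpar).symm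
      rw [hp, neg_smul, sub_eq_add_neg, add_comm]
      rfl
    · exact ⟨0, by simp⟩
    · exact ⟨-1, by simp [neg_smul]⟩
  have hne : m1 * m3 ≠ 0 := by positivity
  constructor
  · apply dist_eq_of_zpow_neg3 _ _ (dist_pos.2 hq13) (dist_pos.2 hq24)
    have h := mul_left_cancel₀ hne (h13.trans h24.symm)
    linarith
  · apply dist_eq_of_zpow_neg3 _ _ (dist_pos.2 hq14) (dist_pos.2 hq23)
    have h := mul_left_cancel₀ hne (h14.trans h23.symm)
    linarith
end

section
/- Let q1, q2, q3, q4 be four points in the Euclidean plane ℝ² with q2 − q1 = t • (q3 − q4) for some t > 0 and q1, q2, q4 not collinear; let r_ij denote their mutual distances and suppose positive masses m1, m2, m3, m4 and real numbers λ, σ satisfy the trapezoidal central configuration equations for these distances. If m1 = m3 and m2 = m4, then the configuration is a rhombus: r12 = r23 = r34 = r14. -/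
/-!
The equations for `r14` and `r23` have equal mass factors `m1 m4 = m2 m3`, and `r ↦ r⁻³` is
injective, so the legs are equal: `r14 = r23`. For a parallelogram (`t = 1`) this gives
`r12 = r34` and then, comparing the equations for `r12` and `r14`, a rhombus. Otherwise the
trapezoid is isosceles, so its diagonals are equal with `r13² = r14² + r12 r34`. The equations
for `r13` and `r24` then force either `m1 = m2` or `r13⁻³ = λ`. Equal masses and distinct bases
are incompatible: eliminating `λ` and `σ` from the equations for `r12`, `r34`, `r13` gives
`r13⁻³ (r12 r34)² = -(r12 + r34) < 0`. If instead `r13⁻³ = λ`, then `σ = 0`, so `r14⁻³ = λ` as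
well and `r14 = r13`, contradicting the diagonal formula.
-/

open RealInnerProductSpace

lemma eq_of_mul_zpow_neg_three_sub_eq {m a b lam : ℝ} (hm : m ≠ 0) (ha : 0 ≤ a) (hb : 0 ≤ b)
    (h : m * (a ^ (-3 : ℤ) - lam) = m * (b ^ (-3 : ℤ) - lam)) : a = b :=
  (zpow_left_inj₀ ha hb (by norm_num)).1 (sub_left_inj.1 (mul_left_cancel₀ hm h))

lemma false_of_equal_masses {M x y p lam sig : ℝ} (hM : M ≠ 0)
    (hx : 0 < x) (hy : 0 < y) (hp : 0 < p) (hxy : x ≠ y)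
    (h12 : M * (x ^ (-3 : ℤ) - lam) = sig * y ^ 2)
    (h34 : M * (y ^ (-3 : ℤ) - lam) = sig * x ^ 2)
    (h13 : M * (p ^ (-3 : ℤ) - lam) = -(sig * x * y)) : False := by
  have hx3 : x ^ (-3 : ℤ) * x ^ 3 = 1 := by
    rw [zpow_neg, zpow_ofNat]; exact inv_mul_cancel₀ (by positivity)
  have hy3 : y ^ (-3 : ℤ) * y ^ 3 = 1 := by
    rw [zpow_neg, zpow_ofNat]; exact inv_mul_cancel₀ (by positivity)
  have hlin : p ^ (-3 : ℤ) * (y - x) + x * x ^ (-3 : ℤ) - y * y ^ (-3 : ℤ) = 0 := by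
    refine (mul_eq_zero.1 ?_).resolve_left hM
    linear_combination y * (h12 - h34) - (y - x) * (h12 - h13)
  have key : p ^ (-3 : ℤ) * (x ^ 2 * y ^ 2) = -(x + y) := by
    refine mul_left_cancel₀ (sub_ne_zero.2 hxy.symm) ?_
    linear_combination (x ^ 2 * y ^ 2) * hlin - y ^ 2 * hx3 + x ^ 2 * hy3
  have : 0 < p ^ (-3 : ℤ) * (x ^ 2 * y ^ 2) := by positivity
  linarith

lemma false_of_isosceles_trapezoid {m1 m2 x y l p lam sig : ℝ} (hm1 : 0 < m1) (hm2 : 0 < m2)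
    (hx : 0 < x) (hy : 0 < y) (hxy : x ≠ y) (hl : 0 ≤ l) (hp : 0 ≤ p)
    (hdiag : p ^ 2 = l ^ 2 + x * y)
    (h12 : m1 * m2 * (x ^ (-3 : ℤ) - lam) = sig * y ^ 2)
    (h34 : m1 * m2 * (y ^ (-3 : ℤ) - lam) = sig * x ^ 2)
    (h13 : m1 * m1 * (p ^ (-3 : ℤ) - lam) = -(sig * x * y))
    (h24 : m2 * m2 * (p ^ (-3 : ℤ) - lam) = -(sig * x * y))
    (h14 : m1 * m2 * (l ^ (-3 : ℤ) - lam) = sig * x * y) : False := by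
  have hp_pos : 0 < p := by
    refine hp.lt_of_ne fun hp0 => ?_
    subst hp0
    nlinarith [mul_pos hx hy]
  have hsplit : (m1 - m2) * (m1 + m2) * (p ^ (-3 : ℤ) - lam) = 0 := by
    linear_combination h13 - h24
  rcases mul_eq_zero.1 hsplit with hm | hlam
  · obtain rfl : m1 = m2 := by
      rcases mul_eq_zero.1 hm with h | h <;> linarith
    exact false_of_equal_masses (by positivity) hx hy hp_pos hxy h12 h34 h13
  · have hsig : sig = 0 := by
      have : sig * (x * y) = 0 := by linear_combination h13 - m1 * m1 * hlam
      exact (mul_eq_zero.1 this).resolve_right (by positivity)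
    have hlp : l = p :=
      eq_of_mul_zpow_neg_three_sub_eq (m := m1 * m2) (by positivity) hl hp
        (by linear_combination h14 - m1 * m2 * hlam + x * y * hsig)
    subst hlp
    nlinarith [mul_pos hx hy]

section Trapezoid

variable {V : Type*} [NormedAddCommGroup V] [InnerProductSpace ℝ V] {q1 q2 q3 q4 : V} {t : ℝ}

lemma norm_add_smul_sq (u d : V) (s : ℝ) :
    ‖u + s • d‖ ^ 2 = ‖u‖ ^ 2 + 2 * s * ⟪u, d⟫ + s ^ 2 * ‖d‖ ^ 2 := by
  rw [norm_add_sq_real, real_inner_smul_right, norm_smul, Real.norm_eq_abs, mul_pow, sq_abs]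
  ring

lemma ne_of_sub_eq_smul_of_not_collinear (hpar : q2 - q1 = t • (q3 - q4))
    (hncol : ¬ Collinear ℝ ({q1, q2, q4} : Set V)) : q3 ≠ q4 := by
  intro h34
  rw [h34, sub_self, smul_zero, sub_eq_zero] at hpar
  apply hncol
  rw [hpar, Set.insert_idem]
  exact collinear_pair ℝ q1 q4

lemma dist_eq_abs_mul_dist_of_sub_eq_smul (hpar : q2 - q1 = t • (q3 - q4)) :
    dist q1 q2 = |t| * dist q3 q4 := by
  rw [dist_comm, dist_eq_norm, hpar, norm_smul, Real.norm_eq_abs, dist_eq_norm]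

lemma dist_diagonals_of_dist_legs_eq (hpar : q2 - q1 = t • (q3 - q4)) (ht : 0 ≤ t)
    (ht1 : t ≠ 1) (hleg : dist q1 q4 = dist q2 q3) :
    dist q1 q3 = dist q2 q4 ∧ dist q1 q3 ^ 2 = dist q1 q4 ^ 2 + dist q1 q2 * dist q3 q4 := by
  set u := q4 - q1
  set d := q3 - q4
  have hq2 : q2 = q1 + t • d := by rw [← hpar]; abel
  have e14 : dist q1 q4 = ‖u‖ := dist_comm q1 q4 ▸ dist_eq_norm q4 q1
  have e13 : dist q1 q3 = ‖u + (1 : ℝ) • d‖ := by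
    rw [dist_comm, dist_eq_norm, one_smul]; simp only [u, d]; abel_nf
  have e24 : dist q2 q4 = ‖u + (-t) • d‖ := by
    rw [dist_comm, dist_eq_norm, hq2, neg_smul]; simp only [u, d]; abel_nf
  have e23 : dist q2 q3 = ‖u + (1 - t) • d‖ := by
    rw [dist_comm, dist_eq_norm, hq2, sub_smul, one_smul]; simp only [u, d]; abel_nf
  have e12 : dist q1 q2 * dist q3 q4 = t * ‖d‖ ^ 2 := by
    rw [dist_eq_abs_mul_dist_of_sub_eq_smul hpar, abs_of_nonneg ht, dist_eq_norm]; ring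
  have hinner : 2 * ⟪u, d⟫ = (t - 1) * ‖d‖ ^ 2 := by
    have h := congrArg (· ^ 2) hleg
    simp only [e14, e23, norm_add_smul_sq] at h
    have : (1 - t) * (2 * ⟪u, d⟫ + (1 - t) * ‖d‖ ^ 2) = 0 := by linear_combination -h
    linear_combination (mul_eq_zero.1 this).resolve_left (sub_ne_zero.2 (Ne.symm ht1))
  have h13 : dist q1 q3 ^ 2 = dist q1 q4 ^ 2 + dist q1 q2 * dist q3 q4 := by
    rw [e13, e14, e12, norm_add_smul_sq]; linear_combination hinner
  refine ⟨(pow_left_inj₀ dist_nonneg dist_nonneg two_ne_zero).1 ?_, h13⟩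
  rw [h13, e24, e14, e12, norm_add_smul_sq]; linear_combination t * hinner

end Trapezoid

theorem rhombus_of_m1_eq_m3_m2_eq_m4_general
    (q1 q2 q3 q4 : EuclideanSpace ℝ (Fin 2)) (t : ℝ)
    (ht : 0 < t) (hpar : q2 - q1 = t • (q3 - q4))
    (hncol : ¬ Collinear ℝ ({q1, q2, q4} : Set (EuclideanSpace ℝ (Fin 2))))
    (m1 m2 m3 m4 lam sig : ℝ)
    (hm1 : 0 < m1) (hm2 : 0 < m2)
    (h12 : m1 * m2 * (dist q1 q2 ^ (-3 : ℤ) - lam) = sig * dist q3 q4 ^ 2)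
    (h34 : m3 * m4 * (dist q3 q4 ^ (-3 : ℤ) - lam) = sig * dist q1 q2 ^ 2)
    (h13 : m1 * m3 * (dist q1 q3 ^ (-3 : ℤ) - lam) = -(sig * dist q1 q2 * dist q3 q4))
    (h24 : m2 * m4 * (dist q2 q4 ^ (-3 : ℤ) - lam) = -(sig * dist q1 q2 * dist q3 q4))
    (h14 : m1 * m4 * (dist q1 q4 ^ (-3 : ℤ) - lam) = sig * dist q1 q2 * dist q3 q4)
    (h23 : m2 * m3 * (dist q2 q3 ^ (-3 : ℤ) - lam) = sig * dist q1 q2 * dist q3 q4)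
    (hm13 : m1 = m3) (hm24 : m2 = m4) :
    dist q1 q2 = dist q2 q3 ∧ dist q2 q3 = dist q3 q4 ∧ dist q3 q4 = dist q1 q4 := by
  subst hm13 hm24
  have hy : 0 < dist q3 q4 := dist_pos.2 (ne_of_sub_eq_smul_of_not_collinear hpar hncol)
  have hx : dist q1 q2 = t * dist q3 q4 := by
    rw [dist_eq_abs_mul_dist_of_sub_eq_smul hpar, abs_of_pos ht]
  have hleg : dist q1 q4 = dist q2 q3 :=
    eq_of_mul_zpow_neg_three_sub_eq (m := m1 * m2) (by positivity) dist_nonneg dist_nonneg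
      (by linear_combination h14 - h23)
  rcases eq_or_ne t 1 with rfl | ht1
  · have hbases : dist q3 q4 = dist q1 q2 := by rw [hx, one_mul]
    have hside : dist q1 q2 = dist q1 q4 :=
      eq_of_mul_zpow_neg_three_sub_eq (m := m1 * m2) (by positivity) dist_nonneg dist_nonneg
        (by rw [h12, h14, hbases]; ring)
    exact ⟨hside.trans hleg, by rw [← hleg, ← hside, hbases], hbases.trans hside⟩
  · obtain ⟨hdiag_eq, hdiag⟩ := dist_diagonals_of_dist_legs_eq hpar ht.le ht1 hleg
    have hxy : dist q1 q2 ≠ dist q3 q4 := by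
      rw [hx]; exact fun h => ht1 (mul_right_cancel₀ hy.ne' (h.trans (one_mul _).symm))
    exact (false_of_isosceles_trapezoid hm1 hm2 (hx ▸ mul_pos ht hy) hy hxy dist_nonneg
      dist_nonneg hdiag h12 h34 h13 (hdiag_eq ▸ h24) h14).elim

theorem rhombus_of_m1_eq_m3_m2_eq_m4
    (q1 q2 q3 q4 : EuclideanSpace ℝ (Fin 2)) (t : ℝ)
    (ht : 0 < t) (hpar : q2 - q1 = t • (q3 - q4))
    (hncol : ¬ Collinear ℝ ({q1, q2, q4} : Set (EuclideanSpace ℝ (Fin 2))))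
    (m1 m2 m3 m4 lam sig : ℝ)
    (hm1 : 0 < m1) (hm2 : 0 < m2) (hm3 : 0 < m3) (hm4 : 0 < m4)
    (h12 : m1 * m2 * (dist q1 q2 ^ (-3 : ℤ) - lam) = sig * dist q3 q4 ^ 2)
    (h34 : m3 * m4 * (dist q3 q4 ^ (-3 : ℤ) - lam) = sig * dist q1 q2 ^ 2)
    (h13 : m1 * m3 * (dist q1 q3 ^ (-3 : ℤ) - lam) = -(sig * dist q1 q2 * dist q3 q4))
    (h24 : m2 * m4 * (dist q2 q4 ^ (-3 : ℤ) - lam) = -(sig * dist q1 q2 * dist q3 q4))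
    (h14 : m1 * m4 * (dist q1 q4 ^ (-3 : ℤ) - lam) = sig * dist q1 q2 * dist q3 q4)
    (h23 : m2 * m3 * (dist q2 q3 ^ (-3 : ℤ) - lam) = sig * dist q1 q2 * dist q3 q4)
    (hm13 : m1 = m3) (hm24 : m2 = m4) :
    dist q1 q2 = dist q2 q3 ∧ dist q2 q3 = dist q3 q4 ∧ dist q3 q4 = dist q1 q4 :=
  rhombus_of_m1_eq_m3_m2_eq_m4_general q1 q2 q3 q4 t ht hpar hncol m1 m2 m3 m4 lam sig hm1 hm2 h12
    h34 h13 h24 h14 h23 hm13 hm24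
end

section
/- Let q1, q2, q3, q4 be four points in the Euclidean plane ℝ² with q2 − q1 = t • (q3 − q4) for some t > 0 and q1, q2, q4 not collinear; let r_ij denote their mutual distances, assume the ordering r13 ≥ r24 > r12 ≥ r14 ≥ r23 ≥ r34, and suppose positive masses m1, m2, m3, m4 and real numbers λ, σ satisfy the trapezoidal central configuration equations for these distances. Then the masses satisfy m3 ≤ m4 ≤ m2 and m3 ≤ m1. -/
/-!
Write `φ r = r⁻³`. The equations for the pairs `13, 14` and `23, 24` give
`m3 (λ - φ r13) = m4 (φ r14 - λ)` and `m3 (φ r23 - λ) = m4 (λ - φ r24)`; once `σ > 0` fixes all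
signs, the ordering of the distances forces `m3 ≤ m4`. The equations for `23, 34` and `14, 34`
give `m2 r12 (φ r23 - λ) = m4 r34 (φ r34 - λ)` and `m1 r12 (φ r14 - λ) = m3 r34 (φ r34 - λ)`, so the
other two inequalities follow from `r12 (φ r23 - λ) ≤ r34 (φ r34 - λ)`. That bound comes from the
convexity of `φ` applied to the secants ending at `r24`, and Stewart's theorem in the trapezoid
guarantees that one of the two secant comparisons needed for it holds.
-/

open Set

section

variable {𝕜 : Type*} [Field 𝕜] [LinearOrder 𝕜] [IsStrictOrderedRing 𝕜] {S : Set 𝕜} {φ : 𝕜 → 𝕜}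
  {x y z : 𝕜}

theorem ConvexOn.sub_mul_sub_le (hφ : ConvexOn 𝕜 S φ) (hx : x ∈ S) (hz : z ∈ S) (hxy : x ≤ y)
    (hyz : y ≤ z) : (φ y - φ z) * (z - x) ≤ (φ x - φ z) * (z - y) := by
  rcases hxy.eq_or_lt with rfl | hxy
  · rfl
  rcases hyz.eq_or_lt with rfl | hyz
  · simp
  linarith [hφ.secant_mono_aux1 hx hz hxy hyz]

theorem ConvexOn.mul_sub_le_mul_sub {p s c : 𝕜} (hφ : ConvexOn 𝕜 S φ) (hx : x ∈ S) (hz : z ∈ S)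
    (hxy : x ≤ y) (hyz : y ≤ z) (hxz : x < z) (hφxz : φ z ≤ φ x) (hs : 0 ≤ s) (hsp : s ≤ p)
    (hc : φ z ≤ c) (hw : p * (z - y) ≤ s * (z - x)) :
    p * (φ y - c) ≤ s * (φ x - c) := by
  have hsecant : p * (φ y - φ z) ≤ s * (φ x - φ z) := by
    refine le_of_mul_le_mul_right ?_ (sub_pos.2 hxz)
    calc p * (φ y - φ z) * (z - x) = p * ((φ y - φ z) * (z - x)) := by ring
      _ ≤ p * ((φ x - φ z) * (z - y)) :=
        mul_le_mul_of_nonneg_left (hφ.sub_mul_sub_le hx hz hxy hyz) (hs.trans hsp)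
      _ = (φ x - φ z) * (p * (z - y)) := by ring
      _ ≤ (φ x - φ z) * (s * (z - x)) := mul_le_mul_of_nonneg_left hw (sub_nonneg.2 hφxz)
      _ = s * (φ x - φ z) * (z - x) := by ring
  linarith [mul_nonneg (sub_nonneg.2 hsp) (sub_nonneg.2 hc)]

theorem strictAntiOn_zpow_of_neg {n : ℤ} (hn : n < 0) :
    StrictAntiOn (fun x : 𝕜 ↦ x ^ n) (Ioi 0) := fun x hx y _ hxy ↦ by
  simpa only [zpow_neg, inv_inv] using
    inv_strictAnti₀ (zpow_pos hx (-n)) (zpow_lt_zpow_left₀ (neg_pos.2 hn) hx.le hxy)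

end

theorem dist_eq_inv_mul_dist_of_sub_eq_smul {V : Type*} [NormedAddCommGroup V]
    [NormedSpace ℝ V] {q1 q2 q3 q4 : V} {t : ℝ} (ht : 0 < t) (hpar : q2 - q1 = t • (q3 - q4)) :
    dist q3 q4 = t⁻¹ * dist q1 q2 := by
  rw [dist_eq_norm q3, dist_comm, dist_eq_norm, hpar, norm_smul, Real.norm_of_nonneg ht.le,
    inv_mul_cancel_left₀ ht.ne']

/-- Stewart's theorem for the cevian from `q4` to `q2 + (q4 - q3)`, which lies on the line `q1q2`
at distance `dist q3 q4` from `q2` and at distance `dist q2 q3` from `q4`. -/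
theorem trapezoid_stewart {V : Type*} [NormedAddCommGroup V] [InnerProductSpace ℝ V]
    {q1 q2 q3 q4 : V} {t : ℝ} (ht : 0 < t) (hpar : q2 - q1 = t • (q3 - q4)) :
    dist q1 q2 * dist q2 q3 ^ 2 = dist q3 q4 * dist q1 q4 ^ 2
      + (dist q1 q2 - dist q3 q4) * (dist q2 q4 ^ 2 - dist q3 q4 * dist q1 q2) := by
  have h34 : q3 - q4 = t⁻¹ • (q2 - q1) := by
    rw [hpar, smul_smul, inv_mul_cancel₀ ht.ne', one_smul]
  have h23 : q2 - q3 = (1 - t⁻¹) • (q2 - q1) - (q4 - q1) := by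
    rw [sub_smul, one_smul, ← h34]; abel
  have h24 : q2 - q4 = (q2 - q1) - (q4 - q1) := by abel
  rw [dist_eq_inv_mul_dist_of_sub_eq_smul ht hpar, dist_eq_norm q2 q3, dist_eq_norm q2 q4, h23,
    h24, dist_comm q1 q2, dist_comm q1 q4, dist_eq_norm q2, dist_eq_norm q4]
  generalize q2 - q1 = u, q4 - q1 = w
  rw [norm_sub_sq_real, norm_sub_sq_real, norm_smul, real_inner_smul_left, Real.norm_eq_abs,
    mul_pow, sq_abs]
  ring

theorem trapezoid_dichotomy {p s r14 r23 r24 : ℝ} (hs : 0 ≤ s) (h23 : 0 ≤ r23) (o2 : r23 ≤ r14)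
    (o3 : r14 ≤ p) (o4 : p < r24) (hst : p * r23 ^ 2 = s * r14 ^ 2 + (p - s) * (r24 ^ 2 - s * p)) :
    p * (r24 - p) ≤ s * (r24 - r14) ∨ p * (r24 - r23) ≤ s * (r24 - s) := by
  by_contra! h
  obtain ⟨hA, hB⟩ := h
  have hsp : s < p := by nlinarith
  have hp : 0 < p := hs.trans_lt hsp
  have hsq : p * r23 < (p - s) * r24 + s ^ 2 := by linarith
  have hW : (p - s) * ((r24 - s) ^ 2 + s * p) < p * (p ^ 2 - r14 ^ 2) := by
    nlinarith [mul_self_lt_mul_self (by positivity : 0 ≤ p * r23) hsq]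
  have hF : r24 ^ 2 - s * p ≤ r14 ^ 2 := by nlinarith [mul_self_le_mul_self h23 o2]
  have hG : (p - s) * (s * ((r24 - s) ^ 2 + s * p)) < (p - s) * (2 * p ^ 2 * (r24 - p)) := by
    have : p * (p ^ 2 - r14 ^ 2) ≤ 2 * p ^ 2 * (p - r14) := by
      nlinarith [mul_nonneg (mul_nonneg hp.le (sub_nonneg.2 o3)) (sub_nonneg.2 o3)]
    nlinarith [mul_lt_mul_of_pos_left hA (by positivity : (0:ℝ) < 2 * p ^ 2)]
  have hG := lt_of_mul_lt_mul_left hG (sub_nonneg.2 hsp.le)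
  -- `hW + p * hF + hG` reads `p ((r24 - s)^2 + (r24 - p)^2) < 0`.
  linarith [mul_le_mul_of_nonneg_left hF hp.le, mul_nonneg hp.le (sq_nonneg (r24 - s)),
    mul_nonneg hp.le (sq_nonneg (r24 - p))]

/-- The trapezoidal central configuration equations, with a general potential `φ` in place of
`r ↦ r⁻³`. -/
structure IsTrapezoidalCC (φ : ℝ → ℝ) (r12 r13 r14 r23 r24 r34 m1 m2 m3 m4 lam sig : ℝ) :
    Prop where
  eq12 : m1 * m2 * (φ r12 - lam) = sig * r34 ^ 2
  eq34 : m3 * m4 * (φ r34 - lam) = sig * r12 ^ 2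
  eq13 : m1 * m3 * (φ r13 - lam) = -(sig * r12 * r34)
  eq24 : m2 * m4 * (φ r24 - lam) = -(sig * r12 * r34)
  eq14 : m1 * m4 * (φ r14 - lam) = sig * r12 * r34
  eq23 : m2 * m3 * (φ r23 - lam) = sig * r12 * r34

namespace IsTrapezoidalCC

variable {φ : ℝ → ℝ} {r12 r13 r14 r23 r24 r34 m1 m2 m3 m4 lam sig : ℝ}

theorem sig_pos (h : IsTrapezoidalCC φ r12 r13 r14 r23 r24 r34 m1 m2 m3 m4 lam sig)
    (hm1 : 0 < m1) (hm2 : 0 < m2) (hm4 : 0 < m4) (hp : 0 < r12) (hs : 0 < r34)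
    (hφ : φ r24 < φ r14) : 0 < sig := by
  suffices hS : 0 < sig * r12 * r34 from pos_of_mul_pos_left (pos_of_mul_pos_left hS hs.le) hp.le
  by_contra! hS
  have h14 : φ r14 - lam ≤ 0 :=
    nonpos_of_mul_nonpos_right (h.eq14.trans_le hS) (mul_pos hm1 hm4)
  have h24 : 0 ≤ φ r24 - lam :=
    nonneg_of_mul_nonneg_right (h.eq24.symm ▸ neg_nonneg.2 hS) (mul_pos hm2 hm4)
  linarith

theorem lam_bounds (h : IsTrapezoidalCC φ r12 r13 r14 r23 r24 r34 m1 m2 m3 m4 lam sig)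
    (hm1 : 0 < m1) (hm2 : 0 < m2) (hm3 : 0 < m3) (hm4 : 0 < m4) (hp : 0 < r12) (hs : 0 < r34)
    (hσ : 0 < sig) :
    φ r13 < lam ∧ φ r24 < lam ∧ lam < φ r14 ∧ lam < φ r23 ∧ lam < φ r34 := by
  have hS : 0 < sig * r12 * r34 := by positivity
  refine ⟨?_, ?_, ?_, ?_, ?_⟩
  · exact sub_neg.1 (neg_of_mul_neg_right (h.eq13 ▸ neg_neg_of_pos hS) (by positivity))
  · exact sub_neg.1 (neg_of_mul_neg_right (h.eq24 ▸ neg_neg_of_pos hS) (by positivity))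
  · exact sub_pos.1 (pos_of_mul_pos_right (h.eq14 ▸ hS) (by positivity))
  · exact sub_pos.1 (pos_of_mul_pos_right (h.eq23 ▸ hS) (by positivity))
  · have : 0 < m3 * m4 * (φ r34 - lam) := h.eq34 ▸ by positivity
    exact sub_pos.1 (pos_of_mul_pos_right this (by positivity))

theorem mul_eq_mul (h : IsTrapezoidalCC φ r12 r13 r14 r23 r24 r34 m1 m2 m3 m4 lam sig)
    (hm1 : m1 ≠ 0) (hm2 : m2 ≠ 0) (hm3 : m3 ≠ 0) (hm4 : m4 ≠ 0) :
    (φ r12 - lam) * (φ r34 - lam) = (φ r14 - lam) * (φ r23 - lam) := by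
  refine mul_left_cancel₀ (by positivity : m1 * m2 * m3 * m4 ≠ 0) ?_
  linear_combination m3 * m4 * (φ r34 - lam) * h.eq12 + sig * r34 ^ 2 * h.eq34
    - m2 * m3 * (φ r23 - lam) * h.eq14 - sig * r12 * r34 * h.eq23

theorem m3_le_m4 (h : IsTrapezoidalCC φ r12 r13 r14 r23 r24 r34 m1 m2 m3 m4 lam sig)
    (hm1 : 0 < m1) (hm2 : 0 < m2) (hm4 : 0 < m4) (ha : φ r13 < lam) (hd : lam < φ r23)
    (h1324 : φ r13 ≤ φ r24) (h1423 : φ r14 ≤ φ r23) : m3 ≤ m4 := by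
  have e13 : m3 * (lam - φ r13) = m4 * (φ r14 - lam) :=
    mul_left_cancel₀ hm1.ne' (by linear_combination -h.eq13 - h.eq14)
  have e24 : m3 * (φ r23 - lam) = m4 * (lam - φ r24) :=
    mul_left_cancel₀ hm2.ne' (by linear_combination h.eq23 + h.eq24)
  by_contra! hlt
  have := calc m4 * (φ r14 - lam) = m3 * (lam - φ r13) := e13.symm
    _ > m4 * (lam - φ r13) := mul_lt_mul_of_pos_right hlt (sub_pos.2 ha)
    _ ≥ m4 * (lam - φ r24) := mul_le_mul_of_nonneg_left (by linarith) hm4.le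
    _ = m3 * (φ r23 - lam) := e24.symm
    _ > m4 * (φ r23 - lam) := mul_lt_mul_of_pos_right hlt (sub_pos.2 hd)
    _ ≥ m4 * (φ r14 - lam) := mul_le_mul_of_nonneg_left (by linarith) hm4.le
  exact lt_irrefl _ this

theorem r12_mul_sub_le_r34_mul_sub
    (h : IsTrapezoidalCC φ r12 r13 r14 r23 r24 r34 m1 m2 m3 m4 lam sig)
    (hφ : StrictAntiOn φ (Ioi 0)) (hφc : ConvexOn ℝ (Ioi 0) φ)
    (hm1 : m1 ≠ 0) (hm2 : m2 ≠ 0) (hm3 : m3 ≠ 0) (hm4 : m4 ≠ 0)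
    (hb : φ r24 < lam) (hc : lam < φ r14) (hf : lam < φ r34) (hs : 0 < r34)
    (o1 : r34 ≤ r23) (o2 : r23 ≤ r14) (o3 : r14 ≤ r12) (o4 : r12 < r24)
    (hst : r12 * r23 ^ 2 = r34 * r14 ^ 2 + (r12 - r34) * (r24 ^ 2 - r34 * r12)) :
    r12 * (φ r23 - lam) ≤ r34 * (φ r34 - lam) := by
  have h23 : 0 < r23 := hs.trans_le o1
  have h14 : 0 < r14 := h23.trans_le o2
  have h24 : 0 < r24 := h14.trans (o3.trans_lt o4)
  have hsp : r34 ≤ r12 := o1.trans (o2.trans o3)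
  rcases trapezoid_dichotomy hs.le h23.le o2 o3 o4 hst with hw | hw
  · have hpc : r12 * (φ r12 - lam) ≤ r34 * (φ r14 - lam) :=
      hφc.mul_sub_le_mul_sub h14 h24 o3 o4.le (o3.trans_lt o4)
        ((hφ.le_iff_ge h24 h14).2 (o3.trans o4.le)) hs.le hsp hb.le hw
    refine le_of_mul_le_mul_left ?_ (sub_pos.2 hc)
    calc (φ r14 - lam) * (r12 * (φ r23 - lam)) = r12 * (φ r12 - lam) * (φ r34 - lam) := by
          rw [mul_assoc, h.mul_eq_mul hm1 hm2 hm3 hm4]; ring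
      _ ≤ r34 * (φ r14 - lam) * (φ r34 - lam) := mul_le_mul_of_nonneg_right hpc (sub_pos.2 hf).le
      _ = (φ r14 - lam) * (r34 * (φ r34 - lam)) := by ring
  · exact hφc.mul_sub_le_mul_sub hs h24 o1 (o2.trans (o3.trans o4.le)) (hsp.trans_lt o4)
      ((hφ.le_iff_ge h24 hs).2 (hsp.trans o4.le)) hs.le hsp hb.le hw

theorem m4_le_m2 (h : IsTrapezoidalCC φ r12 r13 r14 r23 r24 r34 m1 m2 m3 m4 lam sig)
    (hm3 : 0 < m3) (hm4 : 0 < m4) (hp : 0 < r12) (hd : lam < φ r23)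
    (hkey : r12 * (φ r23 - lam) ≤ r34 * (φ r34 - lam)) : m4 ≤ m2 := by
  have e : m2 * (r12 * (φ r23 - lam)) = m4 * (r34 * (φ r34 - lam)) :=
    mul_left_cancel₀ hm3.ne' (by linear_combination r12 * h.eq23 - r34 * h.eq34)
  refine le_of_mul_le_mul_right ?_ (mul_pos hp (sub_pos.2 hd))
  calc m4 * (r12 * (φ r23 - lam)) ≤ m4 * (r34 * (φ r34 - lam)) :=
        mul_le_mul_of_nonneg_left hkey hm4.le
    _ = m2 * (r12 * (φ r23 - lam)) := e.symm

theorem m3_le_m1 (h : IsTrapezoidalCC φ r12 r13 r14 r23 r24 r34 m1 m2 m3 m4 lam sig)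
    (hm3 : 0 < m3) (hm4 : 0 < m4) (hp : 0 < r12) (hc : lam < φ r14) (h1423 : φ r14 ≤ φ r23)
    (hkey : r12 * (φ r23 - lam) ≤ r34 * (φ r34 - lam)) : m3 ≤ m1 := by
  have e : m1 * (r12 * (φ r14 - lam)) = m3 * (r34 * (φ r34 - lam)) :=
    mul_left_cancel₀ hm4.ne' (by linear_combination r12 * h.eq14 - r34 * h.eq34)
  refine le_of_mul_le_mul_right ?_ (mul_pos hp (sub_pos.2 hc))
  calc m3 * (r12 * (φ r14 - lam)) ≤ m3 * (r34 * (φ r34 - lam)) :=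
        mul_le_mul_of_nonneg_left
          ((mul_le_mul_of_nonneg_left (sub_le_sub_right h1423 lam) hp.le).trans hkey) hm3.le
    _ = m1 * (r12 * (φ r14 - lam)) := e.symm

theorem mass_ordering (h : IsTrapezoidalCC φ r12 r13 r14 r23 r24 r34 m1 m2 m3 m4 lam sig)
    (hφ : StrictAntiOn φ (Ioi 0)) (hφc : ConvexOn ℝ (Ioi 0) φ)
    (hm1 : 0 < m1) (hm2 : 0 < m2) (hm3 : 0 < m3) (hm4 : 0 < m4) (hs : 0 < r34)
    (o1 : r34 ≤ r23) (o2 : r23 ≤ r14) (o3 : r14 ≤ r12) (o4 : r12 < r24) (o5 : r24 ≤ r13)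
    (hst : r12 * r23 ^ 2 = r34 * r14 ^ 2 + (r12 - r34) * (r24 ^ 2 - r34 * r12)) :
    m3 ≤ m4 ∧ m4 ≤ m2 ∧ m3 ≤ m1 := by
  have h23 : 0 < r23 := hs.trans_le o1
  have h14 : 0 < r14 := h23.trans_le o2
  have hp : 0 < r12 := h14.trans_le o3
  have h24 : 0 < r24 := hp.trans o4
  have h1423 : φ r14 ≤ φ r23 := (hφ.le_iff_ge h14 h23).2 o2
  have hσ := h.sig_pos hm1 hm2 hm4 hp hs ((hφ.lt_iff_gt h24 h14).2 (o3.trans_lt o4))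
  obtain ⟨ha, hb, hc, hd, hf⟩ := h.lam_bounds hm1 hm2 hm3 hm4 hp hs hσ
  have hkey := h.r12_mul_sub_le_r34_mul_sub hφ hφc hm1.ne' hm2.ne' hm3.ne' hm4.ne' hb hc hf hs
    o1 o2 o3 o4 hst
  exact ⟨h.m3_le_m4 hm1 hm2 hm4 ha hd ((hφ.le_iff_ge (h24.trans_le o5) h24).2 o5) h1423,
    h.m4_le_m2 hm3 hm4 hp hd hkey, h.m3_le_m1 hm3 hm4 hp hc h1423 hkey⟩

end IsTrapezoidalCC

theorem mass_partial_ordering_general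
    (q1 q2 q3 q4 : EuclideanSpace ℝ (Fin 2)) (t : ℝ)
    (ht : 0 < t) (hpar : q2 - q1 = t • (q3 - q4))
    (hord1 : dist q2 q4 ≤ dist q1 q3) (hord2 : dist q1 q2 < dist q2 q4)
    (hord3 : dist q1 q4 ≤ dist q1 q2) (hord4 : dist q2 q3 ≤ dist q1 q4)
    (hord5 : dist q3 q4 ≤ dist q2 q3)
    (m1 m2 m3 m4 lam sig : ℝ)
    (hm1 : 0 < m1) (hm2 : 0 < m2) (hm3 : 0 < m3) (hm4 : 0 < m4)
    (h12 : m1 * m2 * (dist q1 q2 ^ (-3 : ℤ) - lam) = sig * dist q3 q4 ^ 2)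
    (h34 : m3 * m4 * (dist q3 q4 ^ (-3 : ℤ) - lam) = sig * dist q1 q2 ^ 2)
    (h13 : m1 * m3 * (dist q1 q3 ^ (-3 : ℤ) - lam) = -(sig * dist q1 q2 * dist q3 q4))
    (h24 : m2 * m4 * (dist q2 q4 ^ (-3 : ℤ) - lam) = -(sig * dist q1 q2 * dist q3 q4))
    (h14 : m1 * m4 * (dist q1 q4 ^ (-3 : ℤ) - lam) = sig * dist q1 q2 * dist q3 q4)
    (h23 : m2 * m3 * (dist q2 q3 ^ (-3 : ℤ) - lam) = sig * dist q1 q2 * dist q3 q4) :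
    m3 ≤ m4 ∧ m4 ≤ m2 ∧ m3 ≤ m1 := by
  have hp : 0 < dist q1 q2 := by linarith [dist_triangle q2 q1 q4, dist_comm q1 q2]
  have hs : 0 < dist q3 q4 := by
    rw [dist_eq_inv_mul_dist_of_sub_eq_smul ht hpar]; positivity
  exact IsTrapezoidalCC.mass_ordering (φ := fun r : ℝ ↦ r ^ (-3 : ℤ))
    ⟨h12, h34, h13, h24, h14, h23⟩ (strictAntiOn_zpow_of_neg (by norm_num)) (convexOn_zpow (-3))
    hm1 hm2 hm3 hm4 hs hord5 hord4 hord3 hord2 hord1 (trapezoid_stewart ht hpar)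

theorem mass_partial_ordering
    (q1 q2 q3 q4 : EuclideanSpace ℝ (Fin 2)) (t : ℝ)
    (ht : 0 < t) (hpar : q2 - q1 = t • (q3 - q4))
    (hncol : ¬ Collinear ℝ ({q1, q2, q4} : Set (EuclideanSpace ℝ (Fin 2))))
    (hord1 : dist q2 q4 ≤ dist q1 q3) (hord2 : dist q1 q2 < dist q2 q4)
    (hord3 : dist q1 q4 ≤ dist q1 q2) (hord4 : dist q2 q3 ≤ dist q1 q4)
    (hord5 : dist q3 q4 ≤ dist q2 q3)
    (m1 m2 m3 m4 lam sig : ℝ)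
    (hm1 : 0 < m1) (hm2 : 0 < m2) (hm3 : 0 < m3) (hm4 : 0 < m4)
    (h12 : m1 * m2 * (dist q1 q2 ^ (-3 : ℤ) - lam) = sig * dist q3 q4 ^ 2)
    (h34 : m3 * m4 * (dist q3 q4 ^ (-3 : ℤ) - lam) = sig * dist q1 q2 ^ 2)
    (h13 : m1 * m3 * (dist q1 q3 ^ (-3 : ℤ) - lam) = -(sig * dist q1 q2 * dist q3 q4))
    (h24 : m2 * m4 * (dist q2 q4 ^ (-3 : ℤ) - lam) = -(sig * dist q1 q2 * dist q3 q4))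
    (h14 : m1 * m4 * (dist q1 q4 ^ (-3 : ℤ) - lam) = sig * dist q1 q2 * dist q3 q4)
    (h23 : m2 * m3 * (dist q2 q3 ^ (-3 : ℤ) - lam) = sig * dist q1 q2 * dist q3 q4) :
    m3 ≤ m4 ∧ m4 ≤ m2 ∧ m3 ≤ m1 :=
  mass_partial_ordering_general q1 q2 q3 q4 t ht hpar hord1 hord2 hord3 hord4 hord5 m1 m2 m3 m4 lam
    sig hm1 hm2 hm3 hm4 h12 h34 h13 h24 h14 h23
end

section
/- Let q1, q2, q3, q4 be four points in the Euclidean plane ℝ² with q2 − q1 = t • (q3 − q4) for some t > 0 and q1, q2, q4 not collinear; let r_ij denote their mutual distances, and assume r24 > r12 and r12 ≥ r34. Then r23²/r14² ≥ r34/r12, and equality holds if and only if the trapezoid is a parallelogram with r12 = r34 and r23 = r14. -/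
/-!
Put `u = q3 - q4` and `w = q2 - q4`, so that `q1 - q4 = w - t • u`. Expanding the squared norms
gives the identity `t r23² - r14² = (t - 1)(r24² - t r34²)`. Since `r12 = t r34`, the hypothesis
`r34 ≤ r12` says `t ≥ 1`, and `r12 < r24` makes the second factor positive, because
`t r34² ≤ t² r34² = r12² < r24²`. Hence `r14² ≤ t r23²`, with equality exactly when `t = 1`.
-/

section Trapezoid

variable {E : Type*} [NormedAddCommGroup E] [InnerProductSpace ℝ E]

theorem mul_norm_sub_sq_sub_norm_sub_smul_sq (t : ℝ) (w u : E) :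
    t * ‖w - u‖ ^ 2 - ‖w - t • u‖ ^ 2 = (t - 1) * (‖w‖ ^ 2 - t * ‖u‖ ^ 2) := by
  rw [norm_sub_sq_real, norm_sub_sq_real, norm_smul, inner_smul_right, Real.norm_eq_abs, mul_pow,
    sq_abs]
  ring

variable {q1 q2 q3 q4 : E} {t : ℝ}

theorem dist_eq_mul_dist_of_sub_eq_smul (hpar : q2 - q1 = t • (q3 - q4)) (ht : 0 ≤ t) :
    dist q1 q2 = t * dist q3 q4 := by
  rw [dist_comm, dist_eq_norm, hpar, norm_smul, Real.norm_of_nonneg ht, dist_eq_norm]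

theorem mul_dist_sq_sub_dist_sq_of_sub_eq_smul (hpar : q2 - q1 = t • (q3 - q4)) :
    t * dist q2 q3 ^ 2 - dist q1 q4 ^ 2 = (t - 1) * (dist q2 q4 ^ 2 - t * dist q3 q4 ^ 2) := by
  simpa only [← hpar, sub_sub_sub_cancel_right, sub_sub_sub_cancel_left, dist_eq_norm] using
    mul_norm_sub_sq_sub_norm_sub_smul_sq t (q2 - q4) (q3 - q4)

theorem mul_dist_sq_lt_dist_sq_of_sub_eq_smul (hpar : q2 - q1 = t • (q3 - q4)) (ht : 1 ≤ t)
    (h24 : dist q1 q2 < dist q2 q4) : t * dist q3 q4 ^ 2 < dist q2 q4 ^ 2 :=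
  calc t * dist q3 q4 ^ 2 ≤ t * (t * dist q3 q4 ^ 2) := le_mul_of_one_le_left (by positivity) ht
    _ = dist q1 q2 ^ 2 := by rw [dist_eq_mul_dist_of_sub_eq_smul hpar (by linarith)]; ring
    _ < dist q2 q4 ^ 2 := pow_lt_pow_left₀ h24 dist_nonneg two_ne_zero

theorem dist_sq_le_mul_dist_sq_of_sub_eq_smul (hpar : q2 - q1 = t • (q3 - q4)) (ht : 1 ≤ t)
    (h24 : dist q1 q2 < dist q2 q4) : dist q1 q4 ^ 2 ≤ t * dist q2 q3 ^ 2 := by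
  have hgap := mul_dist_sq_lt_dist_sq_of_sub_eq_smul hpar ht h24
  rw [← sub_nonneg, mul_dist_sq_sub_dist_sq_of_sub_eq_smul hpar]
  exact mul_nonneg (sub_nonneg.2 ht) (sub_pos.2 hgap).le

theorem dist_sq_eq_mul_dist_sq_iff_of_sub_eq_smul (hpar : q2 - q1 = t • (q3 - q4)) (ht : 1 ≤ t)
    (h24 : dist q1 q2 < dist q2 q4) : dist q1 q4 ^ 2 = t * dist q2 q3 ^ 2 ↔ t = 1 := by
  have hgap := mul_dist_sq_lt_dist_sq_of_sub_eq_smul hpar ht h24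
  rw [← sub_eq_zero, ← neg_eq_zero, neg_sub, mul_dist_sq_sub_dist_sq_of_sub_eq_smul hpar,
    mul_eq_zero, sub_eq_zero, sub_eq_zero, or_iff_left (ne_of_gt hgap)]

end Trapezoid

theorem legs_bases_ratio_inequality
    (q1 q2 q3 q4 : EuclideanSpace ℝ (Fin 2)) (t : ℝ)
    (ht : 0 < t) (hpar : q2 - q1 = t • (q3 - q4))
    (hncol : ¬ Collinear ℝ ({q1, q2, q4} : Set (EuclideanSpace ℝ (Fin 2))))
    (h24 : dist q1 q2 < dist q2 q4) (h1234 : dist q3 q4 ≤ dist q1 q2) :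
    dist q3 q4 / dist q1 q2 ≤ dist q2 q3 ^ 2 / dist q1 q4 ^ 2 ∧
      (dist q2 q3 ^ 2 / dist q1 q4 ^ 2 = dist q3 q4 / dist q1 q2 ↔
        dist q1 q2 = dist q3 q4 ∧ dist q2 q3 = dist q1 q4) := by
  have h12 : q1 ≠ q2 := by
    rintro rfl
    exact hncol (by simpa using collinear_pair ℝ q1 q4)
  have e12 := dist_eq_mul_dist_of_sub_eq_smul hpar ht.le
  have h34 : 0 < dist q3 q4 := pos_of_mul_pos_right (e12 ▸ dist_pos.2 h12) ht.le
  have ht1 : 1 ≤ t := le_of_mul_le_mul_right (by rwa [one_mul, ← e12]) h34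
  have h14 : 0 < dist q1 q4 := dist_pos.2 (by rintro rfl; exact (dist_comm q1 q2 ▸ h24).false)
  have hratio : dist q3 q4 / dist q1 q2 = 1 / t := by rw [e12]; field_simp
  rw [hratio, div_le_div_iff₀ ht (by positivity), one_mul,
    div_eq_div_iff (by positivity) ht.ne', one_mul, mul_comm, eq_comm,
    dist_sq_eq_mul_dist_sq_iff_of_sub_eq_smul hpar ht1 h24]
  refine ⟨dist_sq_le_mul_dist_sq_of_sub_eq_smul hpar ht1 h24, ?_⟩
  constructor
  · rintro rfl
    have hlegs := (dist_sq_eq_mul_dist_sq_iff_of_sub_eq_smul hpar ht1 h24).2 rfl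
    rw [one_mul, pow_left_inj₀ dist_nonneg dist_nonneg two_ne_zero] at hlegs
    exact ⟨by rw [e12, one_mul], hlegs.symm⟩
  · rintro ⟨hbases, -⟩
    rw [e12] at hbases
    exact (mul_eq_right₀ h34.ne').1 hbases
end

section
/- Let q1, q2, q3, q4 be four points in the Euclidean plane ℝ² with q2 − q1 = t • (q3 − q4) for some t > 0 and q1, q2, q4 not collinear; let r_ij denote their mutual distances, assume the ordering r13 ≥ r24 > r12 ≥ r14 ≥ r23 ≥ r34, and suppose positive masses m1, m2, m3, m4 and real numbers λ, σ satisfy the trapezoidal central configuration equations for these distances. If m1 = m3, then the configuration is a rhombus (r12 = r23 = r34 = r14) and the remaining two masses are equal: m2 = m4. -/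
/-!
Write `f r = r⁻³ - λ`. Comparing the equations for `r12` and `r24` (with `r12 < r24`) forces
`σ > 0`, and then the one for `r24` forces `λ > 0`. Since `m1 = m3`, the pairs of equations
(12, 23) and (34, 14) share their mass factors, which cancel to give `r12 f(r12) = r34 f(r23)` and
`r34 f(r34) = r12 f(r14)`. As `f` is decreasing and `r14 ≥ r23`, these combine to
`r34² f(r34) ≤ r12² f(r12)`; but `r ↦ r² f(r) = r⁻¹ - λ r²` is strictly decreasing, so
`r12 ≤ r34`, and the ordering collapses to `r12 = r14 = r23 = r34`. The equations for `r14` and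
`r23` then read `m1 m4 f(r) = m1 m2 f(r)` with `f(r) ≠ 0`, whence `m2 = m4`.
-/

lemma zpow_neg_lt_zpow_neg {K : Type*} [Field K] [LinearOrder K] [IsStrictOrderedRing K]
    {a b : K} {n : ℤ} (hn : 0 < n) (ha : 0 < a) (hab : a < b) : b ^ (-n) < a ^ (-n) := by
  simpa only [zpow_neg] using inv_strictAnti₀ (zpow_pos ha n) (zpow_lt_zpow_left₀ hn ha.le hab)

lemma zpow_neg_le_zpow_neg {K : Type*} [Field K] [LinearOrder K] [IsStrictOrderedRing K]
    {a b : K} {n : ℤ} (hn : 0 ≤ n) (ha : 0 < a) (hab : a ≤ b) : b ^ (-n) ≤ a ^ (-n) := by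
  simpa only [zpow_neg] using inv_anti₀ (zpow_pos ha n) (zpow_le_zpow_left₀ hn ha.le hab)

lemma sq_mul_zpow_neg_three_sub_lt {lam a b : ℝ} (hlam : 0 ≤ lam) (ha : 0 < a) (hab : a < b) :
    b ^ 2 * (b ^ (-3 : ℤ) - lam) < a ^ 2 * (a ^ (-3 : ℤ) - lam) := by
  have key : ∀ x : ℝ, 0 < x → x ^ 2 * (x ^ (-3 : ℤ) - lam) = x⁻¹ - x ^ 2 * lam := by
    intro x hx
    rw [mul_sub, zpow_neg, ← zpow_natCast, ← div_eq_mul_inv, ← zpow_sub₀ hx.ne']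
    norm_num
  rw [key b (ha.trans hab), key a ha]
  have := mul_le_mul_of_nonneg_right (pow_le_pow_left₀ ha.le hab.le 2) hlam
  linarith [inv_strictAnti₀ ha hab]

section TrapezoidalEquations

variable {r12 r14 r23 r24 r34 m1 m2 m4 lam sig : ℝ}

lemma sig_pos_of_trapezoidal (hr12 : 0 < r12) (hr34 : 0 < r34) (h1224 : r12 < r24)
    (hm1 : 0 < m1) (hm2 : 0 < m2) (hm4 : 0 < m4)
    (h12 : m1 * m2 * (r12 ^ (-3 : ℤ) - lam) = sig * r34 ^ 2)
    (h24 : m2 * m4 * (r24 ^ (-3 : ℤ) - lam) = -(sig * r12 * r34)) :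
    0 < sig := by
  by_contra! hsig
  have hf12 : r12 ^ (-3 : ℤ) - lam ≤ 0 :=
    nonpos_of_mul_nonpos_right (h12 ▸ mul_nonpos_of_nonpos_of_nonneg hsig (sq_nonneg r34))
      (mul_pos hm1 hm2)
  have hf24 : 0 ≤ r24 ^ (-3 : ℤ) - lam :=
    nonneg_of_mul_nonneg_right
      (h24 ▸ neg_nonneg.mpr (mul_nonpos_of_nonpos_of_nonneg
        (mul_nonpos_of_nonpos_of_nonneg hsig hr12.le) hr34.le))
      (mul_pos hm2 hm4)
  linarith [zpow_neg_lt_zpow_neg (by norm_num : (0 : ℤ) < 3) hr12 h1224]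

lemma lam_pos_of_trapezoidal (hr12 : 0 < r12) (hr34 : 0 < r34) (hr24 : 0 < r24)
    (hm2 : 0 < m2) (hm4 : 0 < m4) (hsig : 0 < sig)
    (h24 : m2 * m4 * (r24 ^ (-3 : ℤ) - lam) = -(sig * r12 * r34)) :
    0 < lam := by
  have hf24 : r24 ^ (-3 : ℤ) - lam < 0 :=
    neg_of_mul_neg_right (h24 ▸ neg_neg_of_pos (by positivity)) (mul_pos hm2 hm4).le
  linarith [zpow_pos hr24 (-3)]

lemma le_of_trapezoidal_balance (hlam : 0 ≤ lam) (hr12 : 0 < r12) (hr34 : 0 < r34)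
    (h2314 : r23 ≤ r14) (h3423 : r34 ≤ r23)
    (hA : r12 * (r12 ^ (-3 : ℤ) - lam) = r34 * (r23 ^ (-3 : ℤ) - lam))
    (hB : r34 * (r34 ^ (-3 : ℤ) - lam) = r12 * (r14 ^ (-3 : ℤ) - lam)) :
    r12 ≤ r34 := by
  by_contra! h
  have hf : r14 ^ (-3 : ℤ) ≤ r23 ^ (-3 : ℤ) :=
    zpow_neg_le_zpow_neg (by norm_num) (hr34.trans_le h3423) h2314
  have : r34 ^ 2 * (r34 ^ (-3 : ℤ) - lam) ≤ r12 ^ 2 * (r12 ^ (-3 : ℤ) - lam) :=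
    calc r34 ^ 2 * (r34 ^ (-3 : ℤ) - lam) = r34 * (r12 * (r14 ^ (-3 : ℤ) - lam)) := by
          rw [← hB]; ring
      _ ≤ r34 * (r12 * (r23 ^ (-3 : ℤ) - lam)) := by gcongr
      _ = r12 ^ 2 * (r12 ^ (-3 : ℤ) - lam) := by rw [pow_two, mul_assoc, hA]; ring
  exact (sq_mul_zpow_neg_three_sub_lt hlam hr34 h).not_ge this

lemma rhombus_of_trapezoidal (hr12 : 0 < r12) (hr34 : 0 < r34) (h1224 : r12 < r24)
    (h1412 : r14 ≤ r12) (h2314 : r23 ≤ r14) (h3423 : r34 ≤ r23)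
    (hm1 : 0 < m1) (hm2 : 0 < m2) (hm4 : 0 < m4)
    (h12 : m1 * m2 * (r12 ^ (-3 : ℤ) - lam) = sig * r34 ^ 2)
    (h34 : m1 * m4 * (r34 ^ (-3 : ℤ) - lam) = sig * r12 ^ 2)
    (h24 : m2 * m4 * (r24 ^ (-3 : ℤ) - lam) = -(sig * r12 * r34))
    (h14 : m1 * m4 * (r14 ^ (-3 : ℤ) - lam) = sig * r12 * r34)
    (h23 : m2 * m1 * (r23 ^ (-3 : ℤ) - lam) = sig * r12 * r34) :
    (r12 = r23 ∧ r23 = r34 ∧ r34 = r14) ∧ m2 = m4 := by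
  have hsig := sig_pos_of_trapezoidal hr12 hr34 h1224 hm1 hm2 hm4 h12 h24
  have hlam := lam_pos_of_trapezoidal hr12 hr34 (hr12.trans h1224) hm2 hm4 hsig h24
  have hA : r12 * (r12 ^ (-3 : ℤ) - lam) = r34 * (r23 ^ (-3 : ℤ) - lam) :=
    mul_left_cancel₀ (mul_pos hm1 hm2).ne' (by linear_combination r12 * h12 - r34 * h23)
  have hB : r34 * (r34 ^ (-3 : ℤ) - lam) = r12 * (r14 ^ (-3 : ℤ) - lam) :=
    mul_left_cancel₀ (mul_pos hm1 hm4).ne' (by linear_combination r34 * h34 - r12 * h14)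
  have h1234 := le_of_trapezoidal_balance hlam.le hr12 hr34 h2314 h3423 hA hB
  obtain rfl : r14 = r12 := by linarith
  obtain rfl : r23 = r14 := by linarith
  obtain rfl : r34 = r23 := by linarith
  refine ⟨⟨rfl, rfl, rfl⟩, ?_⟩
  have hf : m1 * (r34 ^ (-3 : ℤ) - lam) ≠ 0 := by
    intro h0
    have : 0 < m1 * m4 * (r34 ^ (-3 : ℤ) - lam) := h14 ▸ by positivity
    rw [mul_right_comm, h0, zero_mul] at this
    exact this.false
  exact mul_right_cancel₀ hf (by linear_combination h23 - h14)

end TrapezoidalEquations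

theorem rhombus_of_m1_eq_m3_general
    (q1 q2 q3 q4 : EuclideanSpace ℝ (Fin 2)) (t : ℝ)
    (ht : 0 < t) (hpar : q2 - q1 = t • (q3 - q4))
    (hncol : ¬ Collinear ℝ ({q1, q2, q4} : Set (EuclideanSpace ℝ (Fin 2))))
    (hord2 : dist q1 q2 < dist q2 q4)
    (hord3 : dist q1 q4 ≤ dist q1 q2) (hord4 : dist q2 q3 ≤ dist q1 q4)
    (hord5 : dist q3 q4 ≤ dist q2 q3)
    (m1 m2 m3 m4 lam sig : ℝ)
    (hm1 : 0 < m1) (hm2 : 0 < m2) (hm4 : 0 < m4)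
    (h12 : m1 * m2 * (dist q1 q2 ^ (-3 : ℤ) - lam) = sig * dist q3 q4 ^ 2)
    (h34 : m3 * m4 * (dist q3 q4 ^ (-3 : ℤ) - lam) = sig * dist q1 q2 ^ 2)
    (h24 : m2 * m4 * (dist q2 q4 ^ (-3 : ℤ) - lam) = -(sig * dist q1 q2 * dist q3 q4))
    (h14 : m1 * m4 * (dist q1 q4 ^ (-3 : ℤ) - lam) = sig * dist q1 q2 * dist q3 q4)
    (h23 : m2 * m3 * (dist q2 q3 ^ (-3 : ℤ) - lam) = sig * dist q1 q2 * dist q3 q4)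
    (hm13 : m1 = m3) :
    (dist q1 q2 = dist q2 q3 ∧ dist q2 q3 = dist q3 q4 ∧ dist q3 q4 = dist q1 q4) ∧
      m2 = m4 := by
  subst hm13
  have hq12 : q1 ≠ q2 := by
    rintro rfl
    exact hncol (by simpa only [Set.insert_idem] using collinear_pair ℝ q1 q4)
  have hr12 : 0 < dist q1 q2 := dist_pos.mpr hq12
  have hr : dist q1 q2 = t * dist q3 q4 := by
    rw [dist_comm, dist_eq_norm, dist_eq_norm, hpar, norm_smul, Real.norm_of_nonneg ht.le]
  have hr34 : 0 < dist q3 q4 := pos_of_mul_pos_right (hr ▸ hr12) ht.le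
  exact rhombus_of_trapezoidal hr12 hr34 hord2 hord3 hord4 hord5 hm1 hm2 hm4 h12 h34 h24 h14 h23

theorem rhombus_of_m1_eq_m3
    (q1 q2 q3 q4 : EuclideanSpace ℝ (Fin 2)) (t : ℝ)
    (ht : 0 < t) (hpar : q2 - q1 = t • (q3 - q4))
    (hncol : ¬ Collinear ℝ ({q1, q2, q4} : Set (EuclideanSpace ℝ (Fin 2))))
    (hord1 : dist q2 q4 ≤ dist q1 q3) (hord2 : dist q1 q2 < dist q2 q4)
    (hord3 : dist q1 q4 ≤ dist q1 q2) (hord4 : dist q2 q3 ≤ dist q1 q4)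
    (hord5 : dist q3 q4 ≤ dist q2 q3)
    (m1 m2 m3 m4 lam sig : ℝ)
    (hm1 : 0 < m1) (hm2 : 0 < m2) (hm3 : 0 < m3) (hm4 : 0 < m4)
    (h12 : m1 * m2 * (dist q1 q2 ^ (-3 : ℤ) - lam) = sig * dist q3 q4 ^ 2)
    (h34 : m3 * m4 * (dist q3 q4 ^ (-3 : ℤ) - lam) = sig * dist q1 q2 ^ 2)
    (h13 : m1 * m3 * (dist q1 q3 ^ (-3 : ℤ) - lam) = -(sig * dist q1 q2 * dist q3 q4))
    (h24 : m2 * m4 * (dist q2 q4 ^ (-3 : ℤ) - lam) = -(sig * dist q1 q2 * dist q3 q4))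
    (h14 : m1 * m4 * (dist q1 q4 ^ (-3 : ℤ) - lam) = sig * dist q1 q2 * dist q3 q4)
    (h23 : m2 * m3 * (dist q2 q3 ^ (-3 : ℤ) - lam) = sig * dist q1 q2 * dist q3 q4)
    (hm13 : m1 = m3) :
    (dist q1 q2 = dist q2 q3 ∧ dist q2 q3 = dist q3 q4 ∧ dist q3 q4 = dist q1 q4) ∧
      m2 = m4 :=
  rhombus_of_m1_eq_m3_general q1 q2 q3 q4 t ht hpar hncol hord2 hord3 hord4 hord5 m1 m2 m3 m4 lam
    sig hm1 hm2 hm4 h12 h34 h24 h14 h23 hm13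
end

section
/- Let q1, q2, q3, q4 be four points in the Euclidean plane ℝ² with q2 − q1 = t • (q3 − q4) for some t > 0 and q1, q2, q4 not collinear; let r_ij denote their mutual distances, assume the ordering r13 ≥ r24 > r12 ≥ r14 ≥ r23 ≥ r34, and suppose positive masses m1, m2, m3, m4 and real numbers λ, σ satisfy the trapezoidal central configuration equations for these distances. If m3 = m4 (the two adjacent masses bounding the shortest side are equal), then the configuration is an isosceles trapezoid with r14 = r23 and r13 = r24, and the remaining two masses are equal: m1 = m2. -/
private lemma zneg3_lt {x y : ℝ} (hx : 0 < x) (hxy : x < y) :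
    y ^ (-3 : ℤ) < x ^ (-3 : ℤ) := by
  have hy : 0 < y := hx.trans hxy
  have h1 : x ^ (-3 : ℤ) = (x ^ 3)⁻¹ := by
    rw [zpow_neg]; norm_cast
  have h2 : y ^ (-3 : ℤ) = (y ^ 3)⁻¹ := by
    rw [zpow_neg]; norm_cast
  rw [h1, h2]
  have h3 : x ^ 3 < y ^ 3 := pow_lt_pow_left₀ hxy hx.le (by norm_num)
  exact inv_strictAnti₀ (by positivity) h3

private lemma zneg3_le {x y : ℝ} (hx : 0 < x) (hxy : x ≤ y) :
    y ^ (-3 : ℤ) ≤ x ^ (-3 : ℤ) := by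
  rcases hxy.eq_or_lt with rfl | h
  · exact le_refl _
  · exact (zneg3_lt hx h).le

theorem isosceles_trapezoid_of_m3_eq_m4
    (q1 q2 q3 q4 : EuclideanSpace ℝ (Fin 2)) (t : ℝ)
    (ht : 0 < t) (hpar : q2 - q1 = t • (q3 - q4))
    (hncol : ¬ Collinear ℝ ({q1, q2, q4} : Set (EuclideanSpace ℝ (Fin 2))))
    (hord1 : dist q2 q4 ≤ dist q1 q3) (hord2 : dist q1 q2 < dist q2 q4)
    (hord3 : dist q1 q4 ≤ dist q1 q2) (hord4 : dist q2 q3 ≤ dist q1 q4)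
    (hord5 : dist q3 q4 ≤ dist q2 q3)
    (m1 m2 m3 m4 lam sig : ℝ)
    (hm1 : 0 < m1) (hm2 : 0 < m2) (hm3 : 0 < m3) (hm4 : 0 < m4)
    (h12 : m1 * m2 * (dist q1 q2 ^ (-3 : ℤ) - lam) = sig * dist q3 q4 ^ 2)
    (h34 : m3 * m4 * (dist q3 q4 ^ (-3 : ℤ) - lam) = sig * dist q1 q2 ^ 2)
    (h13 : m1 * m3 * (dist q1 q3 ^ (-3 : ℤ) - lam) = -(sig * dist q1 q2 * dist q3 q4))
    (h24 : m2 * m4 * (dist q2 q4 ^ (-3 : ℤ) - lam) = -(sig * dist q1 q2 * dist q3 q4))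
    (h14 : m1 * m4 * (dist q1 q4 ^ (-3 : ℤ) - lam) = sig * dist q1 q2 * dist q3 q4)
    (h23 : m2 * m3 * (dist q2 q3 ^ (-3 : ℤ) - lam) = sig * dist q1 q2 * dist q3 q4)
    (hm34 : m3 = m4) :
    dist q1 q4 = dist q2 q3 ∧ dist q1 q3 = dist q2 q4 ∧ m1 = m2 := by
  subst hm34
  -- q1 ≠ q2
  have hq12 : q1 ≠ q2 := by
    rintro rfl
    apply hncol
    have : ({q1, q1, q4} : Set (EuclideanSpace ℝ (Fin 2))) = {q1, q4} := by
      simp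
    rw [this]
    exact collinear_pair ℝ q1 q4
  have hq34 : q3 ≠ q4 := by
    rintro rfl
    rw [sub_self, smul_zero, sub_eq_zero] at hpar
    exact hq12 hpar.symm
  -- positivity of all distances
  have p34 : (0:ℝ) < dist q3 q4 := dist_pos.mpr hq34
  have p23 : (0:ℝ) < dist q2 q3 := lt_of_lt_of_le p34 hord5
  have p14 : (0:ℝ) < dist q1 q4 := lt_of_lt_of_le p23 hord4
  have p12 : (0:ℝ) < dist q1 q2 := lt_of_lt_of_le p14 hord3
  have p24 : (0:ℝ) < dist q2 q4 := p12.trans hord2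
  have p13 : (0:ℝ) < dist q1 q3 := lt_of_lt_of_le p24 hord1
  -- sum equations
  have key1 : dist q1 q3 ^ (-3 : ℤ) + dist q1 q4 ^ (-3 : ℤ) = 2 * lam := by
    have h0 : m1 * m3 * (dist q1 q3 ^ (-3 : ℤ) + dist q1 q4 ^ (-3 : ℤ) - 2 * lam) = 0 := by
      linear_combination h13 + h14
    rcases mul_eq_zero.mp h0 with h | h
    · exact absurd h (mul_pos hm1 hm3).ne'
    · linarith
  have key2 : dist q2 q3 ^ (-3 : ℤ) + dist q2 q4 ^ (-3 : ℤ) = 2 * lam := by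
    have h0 : m2 * m3 * (dist q2 q3 ^ (-3 : ℤ) + dist q2 q4 ^ (-3 : ℤ) - 2 * lam) = 0 := by
      linear_combination h23 + h24
    rcases mul_eq_zero.mp h0 with h | h
    · exact absurd h (mul_pos hm2 hm3).ne'
    · linarith
  have i1 : dist q1 q3 ^ (-3 : ℤ) ≤ dist q2 q4 ^ (-3 : ℤ) := zneg3_le p24 hord1
  have i2 : dist q1 q4 ^ (-3 : ℤ) ≤ dist q2 q3 ^ (-3 : ℤ) := zneg3_le p23 hord4
  have e13 : dist q1 q3 ^ (-3 : ℤ) = dist q2 q4 ^ (-3 : ℤ) := by linarith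
  have e14 : dist q1 q4 ^ (-3 : ℤ) = dist q2 q3 ^ (-3 : ℤ) := by linarith
  have hd13 : dist q1 q3 = dist q2 q4 := by
    by_contra hne
    have hlt : dist q2 q4 < dist q1 q3 := lt_of_le_of_ne hord1 (Ne.symm hne)
    exact (zneg3_lt p24 hlt).ne e13
  have hd14 : dist q1 q4 = dist q2 q3 := by
    by_contra hne
    have hlt : dist q2 q3 < dist q1 q4 := lt_of_le_of_ne hord4 (Ne.symm hne)
    exact (zneg3_lt p23 hlt).ne e14
  refine ⟨hd14, hd13, ?_⟩
  -- sig ≠ 0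
  have hsig : sig ≠ 0 := by
    intro h0
    subst h0
    have e12 : dist q1 q2 ^ (-3 : ℤ) - lam = 0 := by
      rcases mul_eq_zero.mp (by linarith [h12] :
          m1 * m2 * (dist q1 q2 ^ (-3 : ℤ) - lam) = 0) with h | h
      · exact absurd h (mul_pos hm1 hm2).ne'
      · exact h
    have e13' : dist q1 q3 ^ (-3 : ℤ) - lam = 0 := by
      rcases mul_eq_zero.mp (by linarith [h13] :
          m1 * m3 * (dist q1 q3 ^ (-3 : ℤ) - lam) = 0) with h | h
      · exact absurd h (mul_pos hm1 hm3).ne'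
      · exact h
    have hlt : dist q1 q2 < dist q1 q3 := lt_of_lt_of_le hord2 hord1
    exact (zneg3_lt p12 hlt).ne (by linarith)
  -- X ≠ 0
  have hX : dist q1 q4 ^ (-3 : ℤ) - lam ≠ 0 := by
    intro h
    rw [h, mul_zero] at h14
    exact (mul_ne_zero (mul_ne_zero hsig p12.ne') p34.ne') h14.symm
  -- m1 = m2
  have h23' : m2 * m3 * (dist q1 q4 ^ (-3 : ℤ) - lam) = sig * dist q1 q2 * dist q3 q4 := by
    rw [e14]; exact h23
  have hz : (m1 - m2) * (m3 * (dist q1 q4 ^ (-3 : ℤ) - lam)) = 0 := by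
    linear_combination h14 - h23'
  rcases mul_eq_zero.mp hz with h | h
  · linarith [sub_eq_zero.mp h]
  · rcases mul_eq_zero.mp h with h' | h'
    · exact absurd h' hm3.ne'
    · exact absurd h' hX
end

section
/- Let q1, q2, q3, q4 be four points in the Euclidean plane ℝ² with q2 − q1 = t • (q3 − q4) for some t > 0 and q1, q2, q4 not collinear; let r_ij denote their mutual distances, and suppose positive masses m1, m2, m3, m4 and real numbers λ, σ satisfy the trapezoidal central configuration equations for these distances. Then neither leg is the longest exterior side: max(r14, r23) ≤ max(r12, r34). -/
/-!
Write `Fᵢⱼ = rᵢⱼ⁻³ - λ`. Eliminating the masses from the equations of the four exterior sides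
gives `F₁₂ F₃₄ = F₁₄ F₂₃`. For `σ < 0` each diagonal is shorter than a leg, against the trapezoid
identity `r₁₃² + r₂₄² = r₁₄² + r₂₃² + 2 r₁₂ r₃₄`; for `σ = 0` both legs have length `r₁₂`.
For `σ > 0` the diagonals are longer than every exterior side. If the leg `r₁₄` were longer than
both bases, the product relation would make `F₂₃` larger than `F₁₂` and `F₃₄`, i.e. the other leg
shorter than both bases; Stewart's theorem on the line `q₃q₄` rules this out. The leg `r₂₃` is
the same case after the reflection `q₁ ↔ q₂`, `q₃ ↔ q₄`.
-/

section
variable {K : Type*} [Field K] [LinearOrder K] [IsStrictOrderedRing K]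

theorem zpow_lt_zpow_iff_left_of_neg {x y : K} {n : ℤ} (hx : 0 < x) (hy : 0 < y) (hn : n < 0) :
    x ^ n < y ^ n ↔ y < x := by
  obtain ⟨m, rfl⟩ : ∃ m : ℤ, n = -m := ⟨-n, by ring⟩
  rw [zpow_neg, zpow_neg, inv_lt_inv₀ (zpow_pos hx _) (zpow_pos hy _),
    zpow_lt_zpow_iff_left₀ hy.le hx.le (by omega)]
end

section
variable {P : Type*} [PseudoMetricSpace P] {q1 q2 q3 q4 : P} {m1 m2 m3 m4 lam sig : ℝ}

structure IsTrapezoidalCC_s19 (q1 q2 q3 q4 : P) (m1 m2 m3 m4 lam sig : ℝ) : Prop where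
  pos_m1 : 0 < m1
  pos_m2 : 0 < m2
  pos_m3 : 0 < m3
  pos_m4 : 0 < m4
  eq12 : m1 * m2 * (dist q1 q2 ^ (-3 : ℤ) - lam) = sig * dist q3 q4 ^ 2
  eq34 : m3 * m4 * (dist q3 q4 ^ (-3 : ℤ) - lam) = sig * dist q1 q2 ^ 2
  eq13 : m1 * m3 * (dist q1 q3 ^ (-3 : ℤ) - lam) = -(sig * dist q1 q2 * dist q3 q4)
  eq24 : m2 * m4 * (dist q2 q4 ^ (-3 : ℤ) - lam) = -(sig * dist q1 q2 * dist q3 q4)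
  eq14 : m1 * m4 * (dist q1 q4 ^ (-3 : ℤ) - lam) = sig * dist q1 q2 * dist q3 q4
  eq23 : m2 * m3 * (dist q2 q3 ^ (-3 : ℤ) - lam) = sig * dist q1 q2 * dist q3 q4

namespace IsTrapezoidalCC_s19

theorem mirror (hcc : IsTrapezoidalCC_s19 q1 q2 q3 q4 m1 m2 m3 m4 lam sig) :
    IsTrapezoidalCC_s19 q2 q1 q4 q3 m2 m1 m4 m3 lam sig where
  pos_m1 := hcc.pos_m2
  pos_m2 := hcc.pos_m1
  pos_m3 := hcc.pos_m4
  pos_m4 := hcc.pos_m3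
  eq12 := by rw [dist_comm q2, dist_comm q4, mul_comm m2, hcc.eq12]
  eq34 := by rw [dist_comm q2, dist_comm q4, mul_comm m4, hcc.eq34]
  eq13 := by rw [dist_comm q2 q1, dist_comm q4 q3, hcc.eq24]
  eq24 := by rw [dist_comm q2 q1, dist_comm q4 q3, hcc.eq13]
  eq14 := by rw [dist_comm q2 q1, dist_comm q4 q3, hcc.eq23]
  eq23 := by rw [dist_comm q2 q1, dist_comm q4 q3, hcc.eq14]

theorem bases_mul_eq_legs_mul (hcc : IsTrapezoidalCC_s19 q1 q2 q3 q4 m1 m2 m3 m4 lam sig) :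
    (dist q1 q2 ^ (-3 : ℤ) - lam) * (dist q3 q4 ^ (-3 : ℤ) - lam)
      = (dist q1 q4 ^ (-3 : ℤ) - lam) * (dist q2 q3 ^ (-3 : ℤ) - lam) := by
  have hm : m1 * m2 * m3 * m4 ≠ 0 := by
    have := hcc.pos_m1; have := hcc.pos_m2; have := hcc.pos_m3; have := hcc.pos_m4
    positivity
  refine mul_left_cancel₀ hm ?_
  linear_combination (m3 * m4 * (dist q3 q4 ^ (-3 : ℤ) - lam)) * hcc.eq12
    + (sig * dist q3 q4 ^ 2) * hcc.eq34 - (m2 * m3 * (dist q2 q3 ^ (-3 : ℤ) - lam)) * hcc.eq14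
    - (sig * dist q1 q2 * dist q3 q4) * hcc.eq23

theorem legs_eq_of_sig_eq_zero (hcc : IsTrapezoidalCC_s19 q1 q2 q3 q4 m1 m2 m3 m4 lam 0) :
    dist q1 q4 = dist q1 q2 ∧ dist q2 q3 = dist q1 q2 := by
  have h12 := hcc.eq12
  have h14 := hcc.eq14
  have h23 := hcc.eq23
  simp only [zero_mul, mul_eq_zero, hcc.pos_m1.ne', hcc.pos_m2.ne', hcc.pos_m3.ne',
    hcc.pos_m4.ne', false_or, sub_eq_zero] at h12 h14 h23
  constructor
  · exact (zpow_left_inj₀ dist_nonneg dist_nonneg (by norm_num)).1 (h14.trans h12.symm)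
  · exact (zpow_left_inj₀ dist_nonneg dist_nonneg (by norm_num)).1 (h23.trans h12.symm)

end IsTrapezoidalCC_s19

end

section
variable {V : Type*} [NormedAddCommGroup V] [InnerProductSpace ℝ V]

/-- Stewart's theorem, for the point at signed position `s` on the line `xy`. -/
theorem dist_sq_add_smul_sub (p x y : V) (s : ℝ) :
    dist p (x + s • (y - x)) ^ 2
      = (1 - s) * dist p x ^ 2 + s * dist p y ^ 2 - s * (1 - s) * dist x y ^ 2 := by
  have hp : p - (x + s • (y - x)) = (1 - s) • (p - x) + s • (p - y) := by module
  have hxy : x - y = (p - y) - (p - x) := by abel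
  simp only [dist_eq_norm, hp, hxy]
  generalize p - x = a, p - y = b
  rw [norm_add_sq_real, norm_sub_sq_real, norm_smul, norm_smul, real_inner_smul_left,
    real_inner_smul_right, Real.norm_eq_abs, Real.norm_eq_abs, mul_pow, mul_pow, sq_abs, sq_abs,
    real_inner_comm]
  ring

theorem collinear_of_sub_eq_smul {p₁ p₂ p₃ : V} (c : ℝ) (h : p₃ - p₁ = c • (p₂ - p₁)) :
    Collinear ℝ ({p₁, p₂, p₃} : Set V) := by
  have hmem : p₃ ∈ line[ℝ, p₁, p₂] := by
    rw [show p₃ = AffineMap.lineMap p₁ p₂ c by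
      rw [AffineMap.lineMap_apply, vsub_eq_sub, vadd_eq_add, ← h, sub_add_cancel]]
    exact AffineMap.lineMap_mem_affineSpan_pair _ _ _
  simpa only [Set.insert_comm p₃, Set.pair_comm p₃] using
    collinear_insert_of_mem_affineSpan_pair hmem

variable {q1 q2 q3 q4 : V} {t : ℝ} {m1 m2 m3 m4 lam sig : ℝ}

theorem dist_sq_two_three_of_parallel (hpar : q2 - q1 = t • (q3 - q4)) :
    dist q2 q3 ^ 2 = (1 - t) * dist q1 q3 ^ 2 + t * dist q1 q4 ^ 2
      - t * (1 - t) * dist q3 q4 ^ 2 := by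
  have h : dist q2 q3 = dist q1 (q3 + t • (q4 - q3)) := by
    rw [dist_eq_norm, dist_eq_norm, sub_eq_iff_eq_add.mp hpar]
    congr 1
    module
  rw [h, dist_sq_add_smul_sub]

theorem dist_sq_two_four_of_parallel (hpar : q2 - q1 = t • (q3 - q4)) :
    dist q2 q4 ^ 2 = (1 + t) * dist q1 q4 ^ 2 - t * dist q1 q3 ^ 2
      + t * (1 + t) * dist q3 q4 ^ 2 := by
  have h : dist q2 q4 = dist q1 (q4 + (-t) • (q3 - q4)) := by
    rw [dist_eq_norm, dist_eq_norm, sub_eq_iff_eq_add.mp hpar]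
    congr 1
    module
  rw [h, dist_sq_add_smul_sub, dist_comm q4 q3]
  ring

theorem dist_eq_mul_dist_of_parallel (ht : 0 ≤ t) (hpar : q2 - q1 = t • (q3 - q4)) :
    dist q1 q2 = t * dist q3 q4 := by
  rw [dist_comm, dist_eq_norm, hpar, norm_smul, Real.norm_of_nonneg ht, dist_eq_norm]

theorem dist_sq_add_dist_sq_of_parallel (ht : 0 ≤ t) (hpar : q2 - q1 = t • (q3 - q4)) :
    dist q1 q3 ^ 2 + dist q2 q4 ^ 2
      = dist q1 q4 ^ 2 + dist q2 q3 ^ 2 + 2 * dist q1 q2 * dist q3 q4 := by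
  rw [dist_sq_two_three_of_parallel hpar, dist_sq_two_four_of_parallel hpar,
    dist_eq_mul_dist_of_parallel ht hpar]
  ring

theorem min_dist_lt_dist_of_parallel (ht : 0 ≤ t) (hpar : q2 - q1 = t • (q3 - q4))
    (h12 : dist q1 q2 < dist q1 q4) (h34 : dist q3 q4 < dist q1 q4)
    (h13 : dist q1 q4 ≤ dist q1 q3) (h24 : dist q1 q4 ≤ dist q2 q4) :
    min (dist q1 q2) (dist q3 q4) < dist q2 q3 := by
  have hd := dist_sq_two_three_of_parallel hpar
  have hf' := dist_sq_two_four_of_parallel hpar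
  have hbases : dist q1 q2 * dist q3 q4 < dist q1 q4 ^ 2 := by
    rw [sq]; exact mul_lt_mul'' h12 h34 dist_nonneg dist_nonneg
  rw [dist_eq_mul_dist_of_parallel ht hpar] at hbases ⊢
  have he : dist q1 q4 ^ 2 ≤ dist q1 q3 ^ 2 := pow_le_pow_left₀ dist_nonneg h13 2
  have hf : dist q1 q4 ^ 2 ≤ dist q2 q4 ^ 2 := pow_le_pow_left₀ dist_nonneg h24 2
  -- `t ≤ 1` means `r₁₂ ≤ r₃₄`.
  rcases le_total t 1 with ht1 | ht1
  · refine (min_le_left _ _).trans_lt (lt_of_pow_lt_pow_left₀ 2 dist_nonneg ?_)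
    nlinarith [mul_nonneg (sub_nonneg.2 ht1) (sub_nonneg.2 he)]
  · refine (min_le_right _ _).trans_lt (lt_of_pow_lt_pow_left₀ 2 dist_nonneg ?_)
    have key : 0 < t * (dist q2 q3 ^ 2 - dist q3 q4 ^ 2) := by
      nlinarith [mul_nonneg (sub_nonneg.2 ht1) (sub_nonneg.2 hf)]
    nlinarith [pos_of_mul_pos_right key ht]

theorem dist_pos_of_parallel_of_not_collinear (ht : 0 < t) (hpar : q2 - q1 = t • (q3 - q4))
    (hncol : ¬Collinear ℝ ({q1, q2, q4} : Set V)) :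
    0 < dist q1 q2 ∧ 0 < dist q1 q3 ∧ 0 < dist q1 q4 ∧ 0 < dist q2 q3 ∧ 0 < dist q2 q4 ∧
      0 < dist q3 q4 := by
  have h12 := dist_pos.2 (ne₁₂_of_not_collinear hncol)
  refine ⟨h12, dist_pos.2 ?_, dist_pos.2 (ne₁₃_of_not_collinear hncol), dist_pos.2 ?_,
    dist_pos.2 (ne₂₃_of_not_collinear hncol), ?_⟩
  · rintro rfl
    exact hncol (collinear_of_sub_eq_smul (-t⁻¹) (by
      rw [hpar, smul_smul, neg_mul, inv_mul_cancel₀ ht.ne', neg_one_smul, neg_sub]))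
  · rintro rfl
    exact hncol (collinear_of_sub_eq_smul (1 - t⁻¹) (by
      rw [sub_smul, one_smul]; nth_rw 2 [hpar]
      rw [smul_smul, inv_mul_cancel₀ ht.ne', one_smul, sub_sub_sub_cancel_left]))
  · rw [dist_eq_mul_dist_of_parallel ht.le hpar] at h12
    exact pos_of_mul_pos_right h12 ht.le

namespace IsTrapezoidalCC_s19

theorem sig_nonneg (hcc : IsTrapezoidalCC_s19 q1 q2 q3 q4 m1 m2 m3 m4 lam sig) (ht : 0 ≤ t)
    (hpar : q2 - q1 = t • (q3 - q4)) (h12 : 0 < dist q1 q2) (h34 : 0 < dist q3 q4)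
    (h13 : 0 < dist q1 q3) (h14 : 0 < dist q1 q4) (h23 : 0 < dist q2 q3)
    (h24 : 0 < dist q2 q4) : 0 ≤ sig := by
  by_contra! hsig
  have hn : (-3 : ℤ) < 0 := by norm_num
  have hS : sig * dist q1 q2 * dist q3 q4 < 0 :=
    mul_neg_of_neg_of_pos (mul_neg_of_neg_of_pos hsig h12) h34
  have F13_pos : 0 < dist q1 q3 ^ (-3 : ℤ) - lam :=
    pos_of_mul_pos_right (hcc.eq13 ▸ neg_pos.2 hS) (mul_pos hcc.pos_m1 hcc.pos_m3).le
  have F24_pos : 0 < dist q2 q4 ^ (-3 : ℤ) - lam :=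
    pos_of_mul_pos_right (hcc.eq24 ▸ neg_pos.2 hS) (mul_pos hcc.pos_m2 hcc.pos_m4).le
  have F14_neg : dist q1 q4 ^ (-3 : ℤ) - lam < 0 :=
    neg_of_mul_neg_right (hcc.eq14 ▸ hS) (mul_pos hcc.pos_m1 hcc.pos_m4).le
  have F23_neg : dist q2 q3 ^ (-3 : ℤ) - lam < 0 :=
    neg_of_mul_neg_right (hcc.eq23 ▸ hS) (mul_pos hcc.pos_m2 hcc.pos_m3).le
  have d13 : dist q1 q3 < dist q1 q4 :=
    (zpow_lt_zpow_iff_left_of_neg h14 h13 hn).1 (by linarith)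
  have d24 : dist q2 q4 < dist q2 q3 :=
    (zpow_lt_zpow_iff_left_of_neg h23 h24 hn).1 (by linarith)
  nlinarith [dist_sq_add_dist_sq_of_parallel ht hpar, mul_pos h12 h34,
    pow_lt_pow_left₀ d13 dist_nonneg two_ne_zero, pow_lt_pow_left₀ d24 dist_nonneg two_ne_zero]

theorem dist_le_max_of_sig_pos (hcc : IsTrapezoidalCC_s19 q1 q2 q3 q4 m1 m2 m3 m4 lam sig)
    (ht : 0 ≤ t) (hpar : q2 - q1 = t • (q3 - q4)) (hsig : 0 < sig) (h12 : 0 < dist q1 q2)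
    (h34 : 0 < dist q3 q4) (h13 : 0 < dist q1 q3) (h23 : 0 < dist q2 q3)
    (h24 : 0 < dist q2 q4) : dist q1 q4 ≤ max (dist q1 q2) (dist q3 q4) := by
  by_contra! hlong
  have hn : (-3 : ℤ) < 0 := by norm_num
  obtain ⟨ha, hb⟩ := max_lt_iff.1 hlong
  have h14 : 0 < dist q1 q4 := h12.trans ha
  have hS : 0 < sig * dist q1 q2 * dist q3 q4 := by positivity
  have hprod := hcc.bases_mul_eq_legs_mul
  set F12 := dist q1 q2 ^ (-3 : ℤ) - lam
  set F34 := dist q3 q4 ^ (-3 : ℤ) - lam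
  set F14 := dist q1 q4 ^ (-3 : ℤ) - lam
  set F23 := dist q2 q3 ^ (-3 : ℤ) - lam
  have F14_pos : 0 < F14 :=
    pos_of_mul_pos_right (hcc.eq14 ▸ hS) (mul_pos hcc.pos_m1 hcc.pos_m4).le
  have F13_neg : dist q1 q3 ^ (-3 : ℤ) - lam < 0 :=
    neg_of_mul_neg_right (hcc.eq13 ▸ neg_neg_of_pos hS) (mul_pos hcc.pos_m1 hcc.pos_m3).le
  have F24_neg : dist q2 q4 ^ (-3 : ℤ) - lam < 0 :=
    neg_of_mul_neg_right (hcc.eq24 ▸ neg_neg_of_pos hS) (mul_pos hcc.pos_m2 hcc.pos_m4).le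
  have F14_lt_F12 : F14 < F12 :=
    sub_lt_sub_right ((zpow_lt_zpow_iff_left_of_neg h14 h12 hn).2 ha) lam
  have F14_lt_F34 : F14 < F34 :=
    sub_lt_sub_right ((zpow_lt_zpow_iff_left_of_neg h14 h34 hn).2 hb) lam
  have F12_lt_F23 : F12 < F23 := by nlinarith
  have F34_lt_F23 : F34 < F23 := by nlinarith
  have d12 : dist q2 q3 < dist q1 q2 :=
    (zpow_lt_zpow_iff_left_of_neg h12 h23 hn).1 (by linarith)
  have d34 : dist q2 q3 < dist q3 q4 :=
    (zpow_lt_zpow_iff_left_of_neg h34 h23 hn).1 (by linarith)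
  have e13 : dist q1 q4 < dist q1 q3 :=
    (zpow_lt_zpow_iff_left_of_neg h13 h14 hn).1 (by linarith)
  have e24 : dist q1 q4 < dist q2 q4 :=
    (zpow_lt_zpow_iff_left_of_neg h24 h14 hn).1 (by linarith)
  exact (min_dist_lt_dist_of_parallel ht hpar ha hb e13.le e24.le).not_gt (lt_min d12 d34)

end IsTrapezoidalCC_s19

end

theorem legs_not_longest_exterior_side
    (q1 q2 q3 q4 : EuclideanSpace ℝ (Fin 2)) (t : ℝ)
    (ht : 0 < t) (hpar : q2 - q1 = t • (q3 - q4))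
    (hncol : ¬ Collinear ℝ ({q1, q2, q4} : Set (EuclideanSpace ℝ (Fin 2))))
    (m1 m2 m3 m4 lam sig : ℝ)
    (hm1 : 0 < m1) (hm2 : 0 < m2) (hm3 : 0 < m3) (hm4 : 0 < m4)
    (h12 : m1 * m2 * (dist q1 q2 ^ (-3 : ℤ) - lam) = sig * dist q3 q4 ^ 2)
    (h34 : m3 * m4 * (dist q3 q4 ^ (-3 : ℤ) - lam) = sig * dist q1 q2 ^ 2)
    (h13 : m1 * m3 * (dist q1 q3 ^ (-3 : ℤ) - lam) = -(sig * dist q1 q2 * dist q3 q4))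
    (h24 : m2 * m4 * (dist q2 q4 ^ (-3 : ℤ) - lam) = -(sig * dist q1 q2 * dist q3 q4))
    (h14 : m1 * m4 * (dist q1 q4 ^ (-3 : ℤ) - lam) = sig * dist q1 q2 * dist q3 q4)
    (h23 : m2 * m3 * (dist q2 q3 ^ (-3 : ℤ) - lam) = sig * dist q1 q2 * dist q3 q4) :
    max (dist q1 q4) (dist q2 q3) ≤ max (dist q1 q2) (dist q3 q4) := by
  have hcc : IsTrapezoidalCC_s19 q1 q2 q3 q4 m1 m2 m3 m4 lam sig :=
    ⟨hm1, hm2, hm3, hm4, h12, h34, h13, h24, h14, h23⟩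
  obtain ⟨r12, r13, r14, r23, r24, r34⟩ := dist_pos_of_parallel_of_not_collinear ht hpar hncol
  rcases lt_trichotomy sig 0 with hsig | rfl | hsig
  · exact absurd (hcc.sig_nonneg ht.le hpar r12 r34 r13 r14 r23 r24) hsig.not_ge
  · obtain ⟨hleg14, hleg23⟩ := hcc.legs_eq_of_sig_eq_zero
    rw [hleg14, hleg23, max_self]
    exact le_max_left _ _
  · have hpar' : q1 - q2 = t • (q4 - q3) := by rw [← neg_sub, hpar, ← smul_neg, neg_sub]
    refine max_le (hcc.dist_le_max_of_sig_pos ht.le hpar hsig r12 r34 r13 r23 r24) ?_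
    simpa only [dist_comm] using hcc.mirror.dist_le_max_of_sig_pos ht.le hpar' hsig
      (by rwa [dist_comm]) (by rwa [dist_comm]) r24 r14 r13
end
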